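/- arXiv:2208.01505 — 8 statements merged into one kernel-verified Lean document; each statement's English description precedes it below -/
import Mathlib

section
/- Let f : ℝ → ℝ be bounded and let q₁, q₂ be negative C¹ functions on (a,b), continuous on [a,b], satisfying dqᵢ/dp = -cᵢ - f(p)/qᵢ on (a,b). If c₂ < c₁ and q₂(b) ≤ q₁(b) < 0, then q₂(p) < q₁(p) for all p ∈ (a,b). -/
open Set Filter Topology

/-- The set of stable steady states `θ (2*i)`, `0 ≤ i ≤ I`. -/
def StablePts (I : ℕ) (θ : ℕ → ℝ) : Set ℝ := {x | ∃ i ≤ I, x = θ (2 * i)}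

/-- Hypothesis (H1): finitely many ordered steady states with alternating signs of `f`. -/
def H1 (f : ℝ → ℝ) (I : ℕ) (θ : ℕ → ℝ) : Prop :=
  0 < I ∧ θ 0 = 1 ∧ θ (2 * I) = 0 ∧
  (∀ i j : ℕ, i < j → j ≤ 2 * I → θ j < θ i) ∧
  (∀ u : ℝ, u < 0 → 0 < f u) ∧
  (∀ i < I, ∀ u : ℝ, θ (2 * i + 1) < u → u < θ (2 * i) → 0 < f u) ∧
  (∀ u : ℝ, 1 < u → f u < 0) ∧
  (∀ i : ℕ, 1 ≤ i → i ≤ I → ∀ u : ℝ, θ (2 * i) < u → u < θ (2 * i - 1) → f u < 0)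

/-- Hypothesis (H2): `f` is `C¹` and Lipschitz away from the stable steady states. -/
def H2 (f : ℝ → ℝ) (I : ℕ) (θ : ℕ → ℝ) : Prop :=
  ∀ x ∉ StablePts I θ, ∃ ε > 0, ContDiffOn ℝ 1 f (Metric.ball x ε) ∧
    ∃ K : NNReal, LipschitzOnWith K f (Metric.ball x ε)

/-- Hypothesis (H3): jump discontinuities at the stable states, positive left limit and
negative right limit. -/
def H3 (f : ℝ → ℝ) (I : ℕ) (θ : ℕ → ℝ) : Prop :=
  ∀ i ≤ I, ∃ Lm Lp : ℝ, 0 < Lm ∧ Lp < 0 ∧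
    Tendsto f (𝓝[<] θ (2 * i)) (𝓝 Lm) ∧ Tendsto f (𝓝[>] θ (2 * i)) (𝓝 Lp)

/-- The phase-plane trajectory from Proposition 3.2: `q` is continuous on `[pl, pu]`,
vanishes at `pu`, is negative in between, solves `dq/dp = -c - f p / q p` away from the
discontinuity points of `f`, and terminates on one of the two axes. -/
def Traj (f : ℝ → ℝ) (I : ℕ) (θ : ℕ → ℝ) (c pu pl : ℝ) (q : ℝ → ℝ) : Prop :=
  pl ∈ Ico (0 : ℝ) pu ∧ ContinuousOn q (Icc pl pu) ∧ q pu = 0 ∧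
  (∀ p ∈ Ioo pl pu, q p < 0) ∧
  (∀ p ∈ Ioo pl pu, p ∉ StablePts I θ → HasDerivAt q (-c - f p / q p) p) ∧
  (0 < pl → q pl = 0) ∧ (pl = 0 → q 0 ≤ 0)

/-- A traveling wave solution: a `C¹` profile satisfying `φ'' + c φ' + f (φ) = 0`
classically wherever `φ` avoids the stable steady states. -/
def IsTW (f : ℝ → ℝ) (I : ℕ) (θ : ℕ → ℝ) (c : ℝ) (φ : ℝ → ℝ) : Prop :=
  ContDiff ℝ 1 φ ∧
  ∀ z : ℝ, φ z ∉ StablePts I θ →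
    HasDerivAt (deriv φ) (-(c * deriv φ z) - f (φ z)) z

/-- `φ` monotonically connects `b` (at `-∞`) and `a` (at `+∞`). -/
def ConnectsMono (φ : ℝ → ℝ) (b a : ℝ) : Prop :=
  Antitone φ ∧ Tendsto φ atBot (𝓝 b) ∧ Tendsto φ atTop (𝓝 a)

/-- A traveling wave is connected if the support of `φ'` is an interval. -/
def ConnectedTW (φ : ℝ → ℝ) : Prop := OrdConnected {z : ℝ | deriv φ z ≠ 0}

/-- A traveling wave is compact if the closure of the support of `φ'` is compact. -/
def CompactTW (φ : ℝ → ℝ) : Prop := IsCompact (closure {z : ℝ | deriv φ z ≠ 0})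

/-- A propagating terrace connecting 1 and 0. -/
def IsTerrace (f : ℝ → ℝ) (I : ℕ) (θ : ℕ → ℝ) (J : ℕ)
    (φ : ℕ → ℝ → ℝ) (c : ℕ → ℝ) (plat : ℕ → ℝ) : Prop :=
  0 < J ∧ plat 0 = 1 ∧ plat J = 0 ∧
  (∀ j < J, plat (j + 1) < plat j) ∧
  (∀ j ≤ J, plat j ∈ StablePts I θ) ∧
  (∀ j : ℕ, j + 1 < J → c j ≤ c (j + 1)) ∧
  ∀ j < J, IsTW f I θ (c j) (φ j) ∧
    ConnectsMono (φ j) (plat j) (plat (j + 1)) ∧ ConnectedTW (φ j)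

set_option maxHeartbeats 1000000 in
/-- comparison principle for phase-plane trajectories. -/
theorem stmt0 (f q₁ q₂ : ℝ → ℝ) (a b c₁ c₂ M : ℝ) (E : Set ℝ) (hE : E.Finite)
    (hab : a < b) (hfM : ∀ p ∈ Icc a b, |f p| ≤ M)
    (hq₁c : ContinuousOn q₁ (Icc a b)) (hq₂c : ContinuousOn q₂ (Icc a b))
    (hq₁neg : ∀ p ∈ Ioo a b, q₁ p < 0) (hq₂neg : ∀ p ∈ Ioo a b, q₂ p < 0)
    (hq₁ode : ∀ p ∈ Ioo a b, p ∉ E → HasDerivAt q₁ (-c₁ - f p / q₁ p) p)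
    (hq₂ode : ∀ p ∈ Ioo a b, p ∉ E → HasDerivAt q₂ (-c₂ - f p / q₂ p) p)
    (hc : c₂ < c₁) (hqb : q₂ b ≤ q₁ b) (hq₁b : q₁ b < 0) :
    ∀ p ∈ Ioo a b, q₂ p < q₁ p := by
  intro p₀ hp₀
  by_contra hcon
  push_neg at hcon
  -- w := q₁ - q₂, with w p₀ ≤ 0
  set w : ℝ → ℝ := fun p => q₁ p - q₂ p with hw
  have hwp₀ : w p₀ ≤ 0 := by show q₁ p₀ - q₂ p₀ ≤ 0; linarith
  have hKsub : Icc p₀ b ⊆ Icc a b := Icc_subset_Icc hp₀.1.le le_rfl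
  have hq1K : ∀ p ∈ Icc p₀ b, q₁ p < 0 := by
    intro p hp
    rcases eq_or_lt_of_le hp.2 with h | h
    · rw [h]; exact hq₁b
    · exact hq₁neg p ⟨lt_of_lt_of_le hp₀.1 hp.1, h⟩
  have hq2K : ∀ p ∈ Icc p₀ b, q₂ p < 0 := by
    intro p hp
    rcases eq_or_lt_of_le hp.2 with h | h
    · rw [h]; linarith
    · exact hq₂neg p ⟨lt_of_lt_of_le hp₀.1 hp.1, h⟩
  have hwc : ContinuousOn w (Icc p₀ b) :=
    (hq₁c.mono hKsub).sub (hq₂c.mono hKsub)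
  -- uniform negativity bound m
  have hKne : (Icc p₀ b).Nonempty := ⟨p₀, le_rfl, hp₀.2.le⟩
  obtain ⟨x₁, hx₁K, hx₁max⟩ := isCompact_Icc.exists_isMaxOn hKne (hq₁c.mono hKsub)
  obtain ⟨x₂, hx₂K, hx₂max⟩ := isCompact_Icc.exists_isMaxOn hKne (hq₂c.mono hKsub)
  set m : ℝ := min (-q₁ x₁) (-q₂ x₂) with hm
  have hmpos : 0 < m := lt_min (by linarith [hq1K x₁ hx₁K]) (by linarith [hq2K x₂ hx₂K])
  have hq1m : ∀ p ∈ Icc p₀ b, q₁ p ≤ -m := by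
    intro p hp
    have h1 : q₁ p ≤ q₁ x₁ := hx₁max hp
    have h2 : m ≤ -q₁ x₁ := min_le_left _ _
    linarith
  have hq2m : ∀ p ∈ Icc p₀ b, q₂ p ≤ -m := by
    intro p hp
    have h1 : q₂ p ≤ q₂ x₂ := hx₂max hp
    have h2 : m ≤ -q₂ x₂ := min_le_right _ _
    linarith
  have hM : 0 ≤ M := le_trans (abs_nonneg _) (hfM a ⟨le_rfl, hab.le⟩)
  set C : ℝ := M / (m * m) with hC
  have hCpos : 0 ≤ C := div_nonneg hM (by positivity)
  set L : ℝ := C + 1 with hL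
  have hLpos : 0 < L := by positivity
  set E₀ : ℝ := Real.exp (L * (b - p₀)) with hE₀
  have hE₀pos : 0 < E₀ := Real.exp_pos _
  have hE₀gt : 1 < E₀ := by
    rw [hE₀, Real.one_lt_exp_iff]
    have h1 : 0 < b - p₀ := by linarith [hp₀.2]
    positivity
  set δ : ℝ := (c₁ - c₂) / (2 * ((C + L) * E₀)) with hδ
  have hδpos : 0 < δ := div_pos (by linarith) (by positivity)
  have hδkey : δ * (2 * ((C + L) * E₀)) = c₁ - c₂ := by
    rw [hδ]; field_simp
  -- the barrier
  set B : ℝ → ℝ := fun p => δ * (1 - Real.exp (L * (p - p₀))) with hB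
  set B' : ℝ → ℝ := fun p => -(δ * (Real.exp (L * (p - p₀)) * L)) with hB'
  have hBd : ∀ y : ℝ, HasDerivAt B (B' y) y := by
    intro y
    have h1 : HasDerivAt (fun y : ℝ => L * (y - p₀)) L y := by
      simpa using ((hasDerivAt_id y).sub_const p₀).const_mul L
    have h2 := h1.exp
    have h3 := ((hasDerivAt_const y (1 : ℝ)).sub h2).const_mul δ
    convert h3 using 1
    · rfl
    · rfl
    · rfl
    · simp only [hB']; ring
  -- the derivative of w off E
  set g : ℝ → ℝ := fun p => (c₂ - c₁) + f p * (q₁ p - q₂ p) / (q₁ p * q₂ p) with hg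
  have hwderiv : ∀ p ∈ Ioo p₀ b, p ∉ E → HasDerivAt w (g p) p := by
    intro p hp hpE
    have hpab : p ∈ Ioo a b := ⟨lt_trans hp₀.1 hp.1, hp.2⟩
    have h1 := hq₁ode p hpab hpE
    have h2 := hq₂ode p hpab hpE
    have hq1 : q₁ p ≠ 0 := ne_of_lt (hq1K p ⟨hp.1.le, hp.2.le⟩)
    have hq2 : q₂ p ≠ 0 := ne_of_lt (hq2K p ⟨hp.1.le, hp.2.le⟩)
    convert h1.sub h2 using 1
    show (c₂ - c₁) + f p * (q₁ p - q₂ p) / (q₁ p * q₂ p)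
      = (-c₁ - f p / q₁ p) - (-c₂ - f p / q₂ p)
    field_simp
    ring
    · rfl
    · rfl
    · rfl
  -- bound on g
  have hgle : ∀ p ∈ Icc p₀ b, g p ≤ (c₂ - c₁) + C * |w p| := by
    intro p hp
    have hq1 := hq1K p hp
    have hq2 := hq2K p hp
    have hqq : 0 < q₁ p * q₂ p := mul_pos_of_neg_of_neg hq1 hq2
    have hmm : m * m ≤ q₁ p * q₂ p := by
      have h1 := hq1m p hp; have h2 := hq2m p hp
      nlinarith
    have hfp : |f p| ≤ M := hfM p (hKsub hp)
    have hwabs : |q₁ p - q₂ p| = |w p| := rfl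
    have habs : f p * (q₁ p - q₂ p) / (q₁ p * q₂ p) ≤ M * |w p| / (m * m) := by
      calc f p * (q₁ p - q₂ p) / (q₁ p * q₂ p)
          ≤ |f p * (q₁ p - q₂ p) / (q₁ p * q₂ p)| := le_abs_self _
        _ = |f p| * |w p| / |q₁ p * q₂ p| := by rw [abs_div, abs_mul, hwabs]
        _ = |f p| * |w p| / (q₁ p * q₂ p) := by rw [abs_of_pos hqq]
        _ ≤ M * |w p| / (m * m) := by
            apply div_le_div₀ (by positivity)
              (mul_le_mul_of_nonneg_right hfp (abs_nonneg _)) (by positivity) hmm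
    have heq : M * |w p| / (m * m) = C * |w p| := by
      rw [hC, div_mul_eq_mul_div]
    show (c₂ - c₁) + f p * (q₁ p - q₂ p) / (q₁ p * q₂ p) ≤ (c₂ - c₁) + C * |w p|
    linarith [habs.trans_eq heq]
  -- apply the barrier lemma
  have key : ∀ ⦃x⦄, x ∈ Icc p₀ b → w x ≤ B x := by
    refine image_le_of_liminf_slope_right_lt_deriv_boundary'
      (f' := fun p => (c₂ - c₁) + C * |w p|) hwc ?_ ?_
      (fun x _ => (hBd x).continuousAt.continuousWithinAt)
      (fun x _ => (hBd x).hasDerivWithinAt) ?_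
    · -- slope condition
      intro x hx r hr
      -- ε₂ : avoid E near x
      have hEclosed : IsClosed (E \ {x}) := (hE.subset diff_subset).isClosed
      have hxnot : x ∉ E \ {x} := fun h => h.2 rfl
      obtain ⟨ε₂, hε₂, hballE⟩ := Metric.isOpen_iff.1 hEclosed.isOpen_compl x hxnot
      -- ε₁ : continuity of the bound
      have hcw : ContinuousWithinAt (fun y => (c₂ - c₁) + C * |w y|) (Icc p₀ b) x :=
        continuousWithinAt_const.add
          (continuousWithinAt_const.mul ((hwc x (Ico_subset_Icc_self hx)).abs))
      have hev : ∀ᶠ y in 𝓝[Icc p₀ b] x, (c₂ - c₁) + C * |w y| < r :=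
        hcw.eventually_mem (Iio_mem_nhds hr)
      obtain ⟨ε₁, hε₁, hball'⟩ := Metric.mem_nhdsWithin_iff.1 hev
      have hball : ∀ y, dist y x < ε₁ → y ∈ Icc p₀ b → (c₂ - c₁) + C * |w y| < r :=
        fun y hd hy => hball' ⟨Metric.mem_ball.2 hd, hy⟩
      set z₀ : ℝ := min (x + min ε₁ ε₂) b with hz₀def
      have hxz₀ : x < z₀ := lt_min (by simp [lt_min hε₁ hε₂]) hx.2
      apply Filter.Eventually.frequently
      filter_upwards [Ioo_mem_nhdsGT_of_mem ⟨le_rfl, hxz₀⟩] with z hz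
      have hxz : x < z := hz.1
      have hzb : z ≤ b := le_of_lt (lt_of_lt_of_le hz.2 (min_le_right _ _))
      have hzε : z < x + min ε₁ ε₂ := lt_of_lt_of_le hz.2 (min_le_left _ _)
      -- MVT on [x, z]
      have hcont : ContinuousOn w (Icc x z) := hwc.mono (Icc_subset_Icc hx.1 hzb)
      have hder : ∀ ξ ∈ Ioo x z, HasDerivAt w (g ξ) ξ := by
        intro ξ hξ
        have hξK : ξ ∈ Ioo p₀ b := ⟨lt_of_le_of_lt hx.1 hξ.1, lt_of_lt_of_le hξ.2 hzb⟩
        apply hwderiv ξ hξK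
        intro hξE
        have hmem : ξ ∈ E \ {x} := ⟨hξE, ne_of_gt hξ.1⟩
        have hd : dist ξ x < ε₂ := by
          rw [Real.dist_eq, abs_of_pos (by linarith [hξ.1] : (0:ℝ) < ξ - x)]
          have := min_le_right ε₁ ε₂
          linarith [hξ.2, hzε]
        exact (hballE hd) hmem
      obtain ⟨ξ, hξmem, hξslope⟩ := exists_hasDerivAt_eq_slope w g hxz hcont hder
      rw [slope_def_field, ← hξslope]
      have hξK : ξ ∈ Icc p₀ b :=
        ⟨le_of_lt (lt_of_le_of_lt hx.1 hξmem.1), le_trans hξmem.2.le hzb⟩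
      have hd : dist ξ x < ε₁ := by
        rw [Real.dist_eq, abs_of_pos (by linarith [hξmem.1] : (0:ℝ) < ξ - x)]
        have := min_le_left ε₁ ε₂
        linarith [hξmem.2, hzε]
      exact lt_of_le_of_lt (hgle ξ hξK) (hball ξ hd hξK)
    · -- w p₀ ≤ B p₀
      have hBp₀ : B p₀ = 0 := by simp [hB]
      rw [hBp₀]; exact hwp₀
    · -- bound at touching points
      intro x hx hxB
      set e : ℝ := Real.exp (L * (x - p₀)) with he
      have hepos : 0 < e := Real.exp_pos _
      have he1 : 1 ≤ e := Real.one_le_exp (by nlinarith [hx.1, hLpos])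
      have heE : e ≤ E₀ := by
        rw [he, hE₀]
        exact Real.exp_le_exp.2 (by nlinarith [hx.2.le, hLpos])
      have hBx : B x = δ * (1 - e) := by simp only [hB, he]
      have hwabs : |w x| = δ * (e - 1) := by
        rw [hxB, hBx, abs_of_nonpos (by nlinarith)]
        ring
      show (c₂ - c₁) + C * |w x| < -(δ * (e * L))
      rw [hwabs]
      nlinarith [mul_le_mul_of_nonneg_left heE (mul_nonneg hδpos.le hCpos),
        mul_le_mul_of_nonneg_left heE (mul_nonneg hδpos.le hLpos.le), hδkey, hδpos, hE₀pos]
  -- conclude: contradiction at b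
  have hwb : q₁ b - q₂ b ≤ B b := key ⟨hp₀.2.le, le_rfl⟩
  have hBb : B b < 0 := by
    have hBbe : B b = δ * (1 - E₀) := by simp only [hB, hE₀]
    rw [hBbe]
    nlinarith
  linarith
end

section
/- Let f : ℝ → ℝ be bounded, let b be a point with f > 0 on a left neighborhood of b, and let q be a negative solution on (a,b) of dq/dp = -c - f(p)/q, continuous on [a,b] with q(b)=0. Then the integrating factor γ(p) = exp(-∫_{p₀}^p f(s)/(q(s)²) ds) (for fixed p₀ ∈ (a,b)) is bounded on [p₀, b) and extends continuously to [p₀, b]. -/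
open MeasureTheory
open Set Filter Topology

/-- the integrating factor is bounded near `b` and extends continuously. -/
theorem stmt1 (f q : ℝ → ℝ) (a b c δ p₀ M : ℝ)
    (hab : a < b) (hδ : 0 < δ) (hfM : ∀ p ∈ Icc a b, |f p| ≤ M)
    (hfpos : ∀ p ∈ Ico (b - δ) b, 0 < f p)
    (hqc : ContinuousOn q (Icc a b)) (hqneg : ∀ p ∈ Ioo a b, q p < 0)
    (hqb : q b = 0)
    (hode : ∀ p ∈ Ioo a b, HasDerivAt q (-c - f p / q p) p)
    (hp₀ : p₀ ∈ Ioo a b) :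
    (∃ C : ℝ, ∀ p ∈ Ico p₀ b,
        Real.exp (-∫ s in p₀..p, f s / (q s) ^ 2) ≤ C) ∧
    ∃ γ : ℝ → ℝ, ContinuousOn γ (Icc p₀ b) ∧
      ∀ p ∈ Ico p₀ b, γ p = Real.exp (-∫ s in p₀..p, f s / (q s) ^ 2) := by
  obtain ⟨hap₀, hp₀b⟩ := hp₀
  set g : ℝ → ℝ := fun s => f s / (q s) ^ 2 with hgdef
  -- interval integrability of g on compact subintervals of (a, b)
  have hii : ∀ x y : ℝ, a < x → x ≤ y → y < b → IntervalIntegrable g volume x y := by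
    intro x y hax hxy hyb
    have hsub : Icc x y ⊆ Ioo a b := fun s hs => ⟨hax.trans_le hs.1, lt_of_le_of_lt hs.2 hyb⟩
    have hsub' : Icc x y ⊆ Icc a b := hsub.trans Ioo_subset_Icc_self
    obtain ⟨z, hz, hzmax⟩ := isCompact_Icc.exists_isMaxOn (nonempty_Icc.2 hxy) (hqc.mono hsub')
    have hqz : q z < 0 := hqneg z (hsub hz)
    have hM0 : 0 ≤ M := le_trans (abs_nonneg _) (hfM x (hsub' ⟨le_rfl, hxy⟩))
    have hbound : ∀ s ∈ Icc x y, ‖g s‖ ≤ M / (q z) ^ 2 := by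
      intro s hs
      have h1 : |f s| ≤ M := hfM s (hsub' hs)
      have h2 : q s ≤ q z := hzmax hs
      have hqs : q s < 0 := hqneg s (hsub hs)
      have hsq : (q z) ^ 2 ≤ (q s) ^ 2 := by nlinarith
      have hzpos : (0:ℝ) < (q z) ^ 2 := by nlinarith
      rw [hgdef, Real.norm_eq_abs]
      simp only
      rw [abs_div, abs_of_nonneg (sq_nonneg (q s))]
      exact div_le_div₀ hM0 h1 hzpos hsq
    have hmeas : AEStronglyMeasurable g (volume.restrict (Icc x y)) := by
      have hq : AEMeasurable q (volume.restrict (Icc x y)) :=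
        (hqc.mono hsub').aemeasurable measurableSet_Icc
      have hd : AEMeasurable (fun s => (-c - deriv q s) / q s)
          (volume.restrict (Icc x y)) :=
        (aemeasurable_const.sub (measurable_deriv q).aemeasurable).div hq
      have heq : (fun s => (-c - deriv q s) / q s) =ᵐ[volume.restrict (Icc x y)] g := by
        filter_upwards [MeasureTheory.ae_restrict_mem measurableSet_Icc] with s hs
        have hsab := hsub hs
        rw [(hode s hsab).deriv, hgdef]
        simp only
        have h3 : -c - (-c - f s / q s) = f s / q s := by ring
        rw [h3, div_div, ← sq]
      exact (hd.congr heq).aestronglyMeasurable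
    have hint : IntegrableOn g (Icc x y) volume := by
      refine MeasureTheory.Integrable.mono'
        (MeasureTheory.integrableOn_const (C := M / (q z) ^ 2) (s := Icc x y) (μ := volume) measure_Icc_lt_top.ne) hmeas ?_
      filter_upwards [MeasureTheory.ae_restrict_mem measurableSet_Icc] with s hs
      exact hbound s hs
    have : IntegrableOn g (uIcc x y) volume := by rwa [uIcc_of_le hxy]
    exact this.intervalIntegrable
  set F : ℝ → ℝ := fun p => ∫ s in p₀..p, g s with hFdef
  set p₁ : ℝ := max p₀ (b - δ) with hp₁def
  have hp₀p₁ : p₀ ≤ p₁ := le_max_left _ _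
  have hp₁b : p₁ < b := max_lt hp₀b (by linarith)
  have hap₁ : a < p₁ := lt_of_lt_of_le hap₀ hp₀p₁
  have hbδp₁ : b - δ ≤ p₁ := le_max_right _ _
  -- F is monotone on (p₁, b)
  have hFmono : ∀ x ∈ Ioo p₁ b, ∀ y ∈ Ioo p₁ b, x ≤ y → F x ≤ F y := by
    intro x hx y hy hxy
    have h1 : IntervalIntegrable g volume p₀ x := hii p₀ x hap₀ (hp₀p₁.trans hx.1.le) hx.2
    have h2 : IntervalIntegrable g volume x y := hii x y (hap₁.trans hx.1) hxy hy.2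
    have hadd := intervalIntegral.integral_add_adjacent_intervals h1 h2
    have hpos : 0 ≤ ∫ s in x..y, g s := by
      refine intervalIntegral.integral_nonneg hxy fun u hu => ?_
      have hfu : 0 < f u :=
        hfpos u ⟨le_trans hbδp₁ (hx.1.le.trans hu.1), lt_of_le_of_lt hu.2 hy.2⟩
      exact div_nonneg hfu.le (sq_nonneg _)
    have : F x + ∫ s in x..y, g s = F y := hadd
    linarith
  set γe : ℝ → ℝ := fun p => Real.exp (-F p) with hγedef
  have hAnti : AntitoneOn γe (Ioo p₁ b) := fun x hx y hy hxy =>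
    Real.exp_le_exp.2 (neg_le_neg (hFmono x hx y hy hxy))
  have hne : (Ioo p₁ b).Nonempty := ⟨(p₁ + b) / 2, by simp only [mem_Ioo]; constructor <;> linarith⟩
  have hbdd : BddBelow (γe '' Ioo p₁ b) := by
    refine ⟨0, fun v hv => ?_⟩
    obtain ⟨x, -, rfl⟩ := hv
    exact (Real.exp_pos _).le
  have htend : Tendsto γe (𝓝[<] b) (𝓝 (sInf (γe '' Ioo p₁ b))) :=
    hAnti.tendsto_nhdsWithin_Ioo_left hne hbdd
  set L : ℝ := sInf (γe '' Ioo p₁ b) with hLdef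
  -- continuity of γe on [p₀, y] for y < b
  have hγec : ∀ y : ℝ, p₀ ≤ y → y < b → ContinuousOn γe (Icc p₀ y) := by
    intro y hpy hyb
    have hFc : ContinuousOn F (uIcc p₀ y) :=
      intervalIntegral.continuousOn_primitive_interval' (hii p₀ y hap₀ hpy hyb) left_mem_uIcc
    rw [uIcc_of_le hpy] at hFc
    exact Real.continuous_exp.comp_continuousOn hFc.neg
  set p₂ : ℝ := (p₁ + b) / 2 with hp₂def
  have hp₁p₂ : p₁ < p₂ := by simp only [hp₂def]; linarith
  have hp₂b : p₂ < b := by simp only [hp₂def]; linarith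
  have hp₀p₂ : p₀ ≤ p₂ := hp₀p₁.trans hp₁p₂.le
  constructor
  · -- boundedness
    obtain ⟨z, hz, hzmax⟩ := isCompact_Icc.exists_isMaxOn (nonempty_Icc.2 hp₀p₂)
      (hγec p₂ hp₀p₂ hp₂b)
    refine ⟨γe z, fun p hp => ?_⟩
    have : Real.exp (-∫ s in p₀..p, f s / (q s) ^ 2) = γe p := rfl
    rw [this]
    rcases le_or_gt p p₂ with h | h
    · exact hzmax ⟨hp.1, h⟩
    · exact le_trans (hAnti ⟨hp₁p₂, hp₂b⟩ ⟨hp₁p₂.trans h, hp.2⟩ h.le)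
        (hzmax ⟨hp₀p₂, le_rfl⟩)
  · -- continuous extension
    refine ⟨fun s => if s < b then γe s else L, ?_, fun p hp => by
      simp only [if_pos hp.2]; rfl⟩
    intro p hp
    rcases lt_or_eq_of_le hp.2 with hpb | hpb
    · -- p < b: locally equal to γe
      set y : ℝ := (p + b) / 2 with hydef
      have hpy : p < y := by simp only [hydef]; linarith
      have hyb : y < b := by simp only [hydef]; linarith
      have hp₀y : p₀ ≤ y := hp.1.trans hpy.le
      have hcy : ContinuousWithinAt γe (Icc p₀ y) p := hγec y hp₀y hyb p ⟨hp.1, hpy.le⟩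
      have hmem : Icc p₀ y ∈ 𝓝[Icc p₀ b] p :=
        mem_nhdsWithin.2 ⟨Iio y, isOpen_Iio, hpy, fun s hs => ⟨hs.2.1, hs.1.le⟩⟩
      have hcwa : ContinuousWithinAt γe (Icc p₀ b) p := hcy.mono_of_mem_nhdsWithin hmem
      refine hcwa.congr_of_eventuallyEq ?_ (if_pos hpb)
      have hev : ∀ᶠ s in 𝓝 p, s ∈ Iio b := isOpen_Iio.eventually_mem hpb
      filter_upwards [hev.filter_mono nhdsWithin_le_nhds] with s hs
      exact if_pos (mem_Iio.1 hs)
    · -- p = b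
      subst hpb
      have h1 : Tendsto (fun s => if s < p then γe s else L) (𝓝[<] p) (𝓝 L) := by
        refine htend.congr' ?_
        filter_upwards [self_mem_nhdsWithin] with s hs
        exact (if_pos (mem_Iio.1 hs)).symm
      have h2 : Tendsto (fun s => if s < p then γe s else L) (𝓝[{p}] p) (𝓝 L) := by
        rw [nhdsWithin_singleton, tendsto_pure_left]
        intro u hu
        simpa using mem_of_mem_nhds hu
      have hle : 𝓝[Icc p₀ p] p ≤ 𝓝[Iio p ∪ {p}] p := by
        apply nhdsWithin_mono
        intro s hs
        rcases lt_or_eq_of_le hs.2 with h | h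
        · exact Or.inl h
        · exact Or.inr (by simp [h])
      have key : Tendsto (fun s => if s < p then γe s else L) (𝓝[Icc p₀ p] p) (𝓝 L) := by
        refine Tendsto.mono_left ?_ hle
        rw [nhdsWithin_union]
        exact tendsto_sup.2 ⟨h1, h2⟩
      show Tendsto (fun s => if s < p then γe s else L) (𝓝[Icc p₀ p] p)
        (𝓝 (if p < p then γe p else L))
      rw [if_neg (lt_irrefl p)]
      exact key
end

section
/- Let f be bounded with |f| ≤ M, and let q be a continuous function on [a,b], negative on (a,b), C¹ on (a,b) except finitely many points, satisfying dq/dp = -c - f(p)/q. Then q² is Lipschitz continuous on [a,b] with Lipschitz constant at most 2|c|·sup|q| + 2M. -/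
open Set Filter Topology

/-- Base case: derivative bound on the open interval, no exceptional points. -/
lemma lip0 (g : ℝ → ℝ) (C a b : ℝ)
    (hg : ContinuousOn g (Icc a b))
    (hd : ∀ p ∈ Ioo a b, ∃ d : ℝ, HasDerivAt g d p ∧ |d| ≤ C) :
    ∀ x ∈ Icc a b, ∀ y ∈ Icc a b, |g y - g x| ≤ C * |y - x| := by
  -- it suffices to handle x ≤ y
  suffices H : ∀ x ∈ Icc a b, ∀ y ∈ Icc a b, x ≤ y → |g y - g x| ≤ C * |y - x| by
    intro x hx y hy
    rcases le_total x y with h | h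
    · exact H x hx y hy h
    · rw [abs_sub_comm, abs_sub_comm y x]; exact H y hy x hx h
  intro x hx y hy hxy
  rcases eq_or_lt_of_le hxy with rfl | hlt
  · simp
  have hsub : Ioo x y ⊆ Icc a b := fun p hp => ⟨hx.1.trans hp.1.le, hp.2.le.trans hy.2⟩
  have hsub' : Ioo x y ⊆ Ioo a b := fun p hp =>
    ⟨lt_of_le_of_lt hx.1 hp.1, lt_of_lt_of_le hp.2 hy.2⟩
  classical
  set g' : ℝ → ℝ := fun p => if h : ∃ d : ℝ, HasDerivAt g d p ∧ |d| ≤ C then h.choose else 0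
    with hg'
  have hprop : ∀ p ∈ Ioo x y, HasDerivAt g (g' p) p ∧ |g' p| ≤ C := by
    intro p hp
    have h := hd p (hsub' hp)
    rw [hg']; simp only [dif_pos h]
    exact h.choose_spec
  have key : ∀ u ∈ Ioo x y, ∀ v ∈ Ioo x y, |g v - g u| ≤ C * |v - u| := by
    intro u hu v hv
    have := Convex.norm_image_sub_le_of_norm_hasDerivWithin_le
      (f := g) (f' := g') (s := Ioo x y)
      (fun p hp => ((hprop p hp).1).hasDerivWithinAt)
      (fun p hp => by rw [Real.norm_eq_abs]; exact (hprop p hp).2)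
      (convex_Ioo x y) hu hv
    simpa [Real.norm_eq_abs] using this
  have hcont : ∀ z ∈ Icc a b, Tendsto g (𝓝[Ioo x y] z) (𝓝 (g z)) := fun z hz =>
    (hg.continuousWithinAt hz).mono_left (nhdsWithin_mono _ hsub)
  have habs : ∀ w : ℝ, Tendsto (fun u : ℝ => |w - u|) (𝓝[Ioo x y] x ⊔ 𝓝[Ioo x y] y) (𝓝 0) →
      True := fun _ _ => trivial
  -- first extend to the left endpoint x
  have keyx : ∀ v ∈ Ioo x y, |g v - g x| ≤ C * |v - x| := by
    intro v hv
    have hne : (𝓝[Ioo x y] x).NeBot := left_nhdsWithin_Ioo_neBot hlt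
    have h1 : Tendsto (fun u => C * |v - u| - |g v - g u|) (𝓝[Ioo x y] x)
        (𝓝 (C * |v - x| - |g v - g x|)) := by
      refine Tendsto.sub ?_ ((tendsto_const_nhds.sub (hcont x hx)).abs)
      exact Tendsto.const_mul _
        (((continuous_const.sub continuous_id).abs.tendsto x).mono_left nhdsWithin_le_nhds)
    have h2 : 0 ≤ C * |v - x| - |g v - g x| := by
      refine ge_of_tendsto h1 ?_
      filter_upwards [self_mem_nhdsWithin] with u hu
      have := key u hu v hv
      linarith
    linarith
  -- then extend to the right endpoint y
  have hne : (𝓝[Ioo x y] y).NeBot := right_nhdsWithin_Ioo_neBot hlt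
  have h1 : Tendsto (fun v => C * |v - x| - |g v - g x|) (𝓝[Ioo x y] y)
      (𝓝 (C * |y - x| - |g y - g x|)) := by
    refine Tendsto.sub ?_ (((hcont y hy).sub tendsto_const_nhds).abs)
    exact Tendsto.const_mul _
      (((continuous_id.sub continuous_const).abs.tendsto y).mono_left nhdsWithin_le_nhds)
  have h2 : 0 ≤ C * |y - x| - |g y - g x| := by
    refine ge_of_tendsto h1 ?_
    filter_upwards [self_mem_nhdsWithin] with v hv
    have := keyx v hv
    linarith
  linarith

/-- Inductive step over the finite exceptional set. -/
lemma lipAux (C : ℝ) (E : Set ℝ) (hE : E.Finite) :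
    ∀ g : ℝ → ℝ, ∀ a b : ℝ, ContinuousOn g (Icc a b) →
    (∀ p ∈ Ioo a b, p ∉ E → ∃ d : ℝ, HasDerivAt g d p ∧ |d| ≤ C) →
    ∀ x ∈ Icc a b, ∀ y ∈ Icc a b, |g y - g x| ≤ C * |y - x| := by
  refine Set.Finite.induction_on _ hE ?_ ?_
  · intro g a b hg hd
    exact lip0 g C a b hg (fun p hp => hd p hp (notMem_empty p))
  · rintro t E htE hEfin IH g a b hg hd
    by_cases ht : t ∈ Ioo a b
    · -- split the interval at t
      have hat : a ≤ t := ht.1.le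
      have htb : t ≤ b := ht.2.le
      have F1 := IH g a t (hg.mono (Icc_subset_Icc le_rfl htb))
        (fun p hp hpE => hd p ⟨hp.1, hp.2.trans ht.2⟩
          (by simp only [mem_insert_iff, not_or]; exact ⟨ne_of_lt hp.2, hpE⟩))
      have F2 := IH g t b (hg.mono (Icc_subset_Icc hat le_rfl))
        (fun p hp hpE => hd p ⟨ht.1.trans hp.1, hp.2⟩
          (by simp only [mem_insert_iff, not_or]; exact ⟨(ne_of_gt hp.1), hpE⟩))
      -- combine
      suffices H : ∀ x ∈ Icc a b, ∀ y ∈ Icc a b, x ≤ y → |g y - g x| ≤ C * |y - x| by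
        intro x hx y hy
        rcases le_total x y with h | h
        · exact H x hx y hy h
        · rw [abs_sub_comm, abs_sub_comm y x]; exact H y hy x hx h
      intro x hx y hy hxy
      rcases le_total y t with hyt | hty
      · exact F1 x ⟨hx.1, hxy.trans hyt⟩ y ⟨hx.1.trans hxy, hyt⟩
      · rcases le_total t x with htx | hxt
        · exact F2 x ⟨htx, hxy.trans hy.2⟩ y ⟨htx.trans hxy, hy.2⟩
        · have e1 := F1 x ⟨hx.1, hxt⟩ t ⟨hat, le_rfl⟩
          have e2 := F2 t ⟨le_rfl, htb⟩ y ⟨hty, hy.2⟩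
          calc |g y - g x| ≤ |g y - g t| + |g t - g x| := abs_sub_le _ _ _
            _ ≤ C * |y - t| + C * |t - x| := add_le_add e2 e1
            _ = C * |y - x| := by
                rw [abs_of_nonneg (by linarith : (0:ℝ) ≤ y - t),
                  abs_of_nonneg (by linarith : (0:ℝ) ≤ t - x),
                  abs_of_nonneg (by linarith : (0:ℝ) ≤ y - x)]
                ring
    · -- t is irrelevant
      exact IH g a b hg (fun p hp hpE => hd p hp
        (by simp only [mem_insert_iff, not_or]
            exact ⟨fun h => ht (h ▸ hp), hpE⟩))

/-- `q²` is Lipschitz with constant at most `2|c| B + 2M`. -/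
theorem stmt2 (f q : ℝ → ℝ) (a b c M B : ℝ) (E : Set ℝ) (hE : E.Finite)
    (hab : a < b) (hfM : ∀ p ∈ Icc a b, |f p| ≤ M)
    (hB : ∀ p ∈ Icc a b, |q p| ≤ B)
    (hqc : ContinuousOn q (Icc a b)) (hqneg : ∀ p ∈ Ioo a b, q p < 0)
    (hode : ∀ p ∈ Ioo a b, p ∉ E → HasDerivAt q (-c - f p / q p) p) :
    LipschitzOnWith (2 * |c| * B + 2 * M).toNNReal
      (fun p => (q p) ^ 2) (Icc a b) := by
  set C : ℝ := 2 * |c| * B + 2 * M with hC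
  have hM0 : 0 ≤ M := (abs_nonneg _).trans (hfM a ⟨le_rfl, hab.le⟩)
  have hB0 : 0 ≤ B := (abs_nonneg _).trans (hB a ⟨le_rfl, hab.le⟩)
  have hC0 : 0 ≤ C := by positivity
  have hd : ∀ p ∈ Ioo a b, p ∉ E →
      ∃ d : ℝ, HasDerivAt (fun p => (q p) ^ 2) d p ∧ |d| ≤ C := by
    intro p hp hpE
    have hq0 : q p ≠ 0 := (hqneg p hp).ne
    have h := (hode p hp hpE).pow 2
    refine ⟨_, h, ?_⟩
    have heq : ((2 : ℕ) : ℝ) * q p ^ (2 - 1) * (-c - f p / q p) = -(2 * c * q p) - 2 * f p := by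
      push_cast
      field_simp
    rw [heq]
    have hpIcc : p ∈ Icc a b := ⟨hp.1.le, hp.2.le⟩
    have h1 : |(-(2 * c * q p) - 2 * f p)| ≤ |2 * c * q p| + |2 * f p| :=
      (abs_sub _ _).trans (by rw [abs_neg])
    have h2 : |2 * c * q p| ≤ 2 * |c| * B := by
      rw [abs_mul, abs_mul, abs_two]
      exact mul_le_mul_of_nonneg_left (hB p hpIcc) (by positivity)
    have h3 : |2 * f p| ≤ 2 * M := by
      rw [abs_mul, abs_two]
      exact mul_le_mul_of_nonneg_left (hfM p hpIcc) (by norm_num)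
    calc |(-(2 * c * q p) - 2 * f p)| ≤ |2 * c * q p| + |2 * f p| := h1
      _ ≤ 2 * |c| * B + 2 * M := add_le_add h2 h3
  have key := lipAux C E hE (fun p => (q p) ^ 2) a b (hqc.pow 2) hd
  rw [lipschitzOnWith_iff_norm_sub_le]
  intro x hx y hy
  rw [Real.norm_eq_abs, Real.norm_eq_abs, Real.coe_toNNReal _ hC0]
  exact key y hy x hx
end

section
/- Let q : [a,b] → ℝ be continuous, negative on (a,b), with q(a) = q(b) = 0, satisfying (1/2) d(q²)/dp = -c q - f(p) on (a,b), where f is bounded. If ∫_a^b f(p) dp > 0 then c > 0, and if ∫_a^b f(p) dp < 0 then c < 0. -/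
open Set Filter Topology

/-- the sign of the wave speed is determined by the sign of `∫ f`. -/
theorem stmt4 (f q : ℝ → ℝ) (a b c M : ℝ) (E : Set ℝ) (hE : E.Finite)
    (hab : a < b) (hfM : ∀ p ∈ Icc a b, |f p| ≤ M)
    (hfint : IntervalIntegrable f MeasureTheory.volume a b)
    (hqc : ContinuousOn q (Icc a b)) (hqneg : ∀ p ∈ Ioo a b, q p < 0)
    (hqa : q a = 0) (hqb : q b = 0)
    (hode : ∀ p ∈ Ioo a b, p ∉ E →
      HasDerivAt (fun s => (q s) ^ 2 / 2) (-c * q p - f p) p) :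
    ((0 < ∫ p in a..b, f p) → 0 < c) ∧ ((∫ p in a..b, f p) < 0 → c < 0) := by
  have hqint : IntervalIntegrable q MeasureTheory.volume a b :=
    hqc.intervalIntegrable_of_Icc hab.le
  have hgint : IntervalIntegrable (fun p => -c * q p - f p) MeasureTheory.volume a b := by
    exact ((hqint.const_mul (-c)).sub hfint)
  have hgc : ContinuousOn (fun s => (q s) ^ 2 / 2) (Icc a b) := by
    exact ((hqc.pow 2).div_const 2)
  have key : (∫ p in a..b, (-c * q p - f p)) = (q b) ^ 2 / 2 - (q a) ^ 2 / 2 :=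
    MeasureTheory.integral_eq_of_hasDerivAt_off_countable_of_le _ _ hab.le
      hE.countable hgc (fun x hx => hode x hx.1 hx.2) hgint
  rw [hqa, hqb] at key
  simp only [intervalIntegral.integral_sub ((hqint.const_mul (-c))) hfint,
    intervalIntegral.integral_const_mul] at key
  have hqI : (∫ p in a..b, q p) < 0 := by
    have := intervalIntegral.intervalIntegral_pos_of_pos_on (hqint.neg)
      (fun x hx => by simpa using (hqneg x hx)) hab
    simp only [Pi.neg_apply, intervalIntegral.integral_neg] at this
    linarith
  constructor <;> intro h <;> nlinarith [key, hqI]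
end

section
/- Let f : [θ,b] → ℝ be C¹ with f(θ) = 0, f > 0 on (θ,b), and f(p) ≤ K(p-θ) for all p ∈ [θ,b]. For c = 2√K, the function q̄(p) = -√K (p - θ) is a subsolution barrier: any continuous solution q of dq/dp = -c - f(p)/q on (θ,b) negative on (θ,b) with q(b) = 0 satisfies q(p) > q̄(p) for all p ∈ (θ,b], and consequently q extends continuously with q(θ) = 0. -/
open Set Filter Topology

set_option maxHeartbeats 1000000 in
/-- the linear barrier `q̄(p) = -√K (p - θ)` for the monostable problem. -/
theorem stmt5 (f q : ℝ → ℝ) (θ b K : ℝ) (hθb : θ < b) (hK : 0 < K)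
    (hf1 : ContDiffOn ℝ 1 f (Icc θ b)) (hfθ : f θ = 0)
    (hfpos : ∀ p ∈ Ioo θ b, 0 < f p)
    (hfK : ∀ p ∈ Icc θ b, f p ≤ K * (p - θ))
    (hqc : ContinuousOn q (Icc θ b)) (hqneg : ∀ p ∈ Ioo θ b, q p < 0)
    (hqb : q b = 0)
    (hode : ∀ p ∈ Ioo θ b,
      HasDerivAt q (-(2 * Real.sqrt K) - f p / q p) p) :
    (∀ p ∈ Ioc θ b, -Real.sqrt K * (p - θ) < q p) ∧ q θ = 0 := by
  set s : ℝ := Real.sqrt K with hs_def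
  have hs : 0 < s := Real.sqrt_pos.mpr hK
  have hsK : s * s = K := Real.mul_self_sqrt hK.le
  set h : ℝ → ℝ := fun p => q p ^ 2 - K * (p - θ) ^ 2 with hh
  have hcontA : ContinuousOn h (Icc θ b) := by
    apply ContinuousOn.sub (hqc.pow 2)
    exact (continuousOn_const.mul (((continuousOn_id).sub continuousOn_const).pow 2))
  have hderiv : ∀ p ∈ Ioo θ b,
      HasDerivAt h (-(4 * s) * q p - 2 * f p - 2 * K * (p - θ)) p := by
    intro p hp
    have hq0 : q p ≠ 0 := (hqneg p hp).ne
    have h1 := (hode p hp).pow 2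
    have h2 : HasDerivAt (fun p => K * (p - θ) ^ 2) (K * (2 * (p - θ))) p := by
      have := (((hasDerivAt_id p).sub_const θ).pow 2).const_mul K
      simpa using this
    have h3 := h1.sub h2
    refine HasDerivAt.congr_deriv (f := h) h3 ?_
    have : q p * (f p / q p) = f p := by field_simp
    push_cast
    norm_num
    nlinarith [this]
  have hbneg : h b < 0 := by
    have : h b = 0 - K * (b - θ) ^ 2 := by simp [hh, hqb]
    rw [this]
    nlinarith [mul_pos hK (pow_pos (sub_pos.mpr hθb) 2)]
  have hkey : ∀ p ∈ Ioo θ b, h p < 0 := by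
    intro p₀ hp₀
    by_contra hcon
    push_neg at hcon
    set A : Set ℝ := {p | p ∈ Icc p₀ b ∧ 0 ≤ h p} with hA
    have hAne : p₀ ∈ A := ⟨⟨le_refl _, hp₀.2.le⟩, hcon⟩
    have hAbdd : BddAbove A := ⟨b, fun x hx => hx.1.2⟩
    have hAclosed : IsClosed A := by
      have : A = Icc p₀ b ∩ h ⁻¹' (Ici 0) := by
        ext x; simp [hA, and_comm]
      rw [this]
      exact ContinuousOn.preimage_isClosed_of_isClosed
        (hcontA.mono (Icc_subset_Icc hp₀.1.le le_rfl)) isClosed_Icc isClosed_Ici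
    set p₂ : ℝ := sSup A with hp₂def
    have hp₂A : p₂ ∈ A := hAclosed.csSup_mem ⟨p₀, hAne⟩ hAbdd
    have hp₂b : p₂ < b := lt_of_le_of_ne hp₂A.1.2 (by
      intro hc
      have := hp₂A.2
      rw [hc] at this
      linarith)
    have hθp₂ : θ < p₂ := lt_of_lt_of_le hp₀.1 hp₂A.1.1
    have hneg : ∀ p ∈ Ioo p₂ b, h p < 0 := by
      intro p hp
      by_contra hc
      push_neg at hc
      have : p ∈ A := ⟨⟨le_trans hp₂A.1.1 hp.1.le, hp.2.le⟩, hc⟩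
      exact absurd (le_csSup hAbdd this) (not_le.mpr hp.1)
    set d₀ : ℝ := p₀ - θ with hd₀
    have hd₀pos : 0 < d₀ := by simp [hd₀]; linarith [hp₀.1]
    set M : ℝ := 4 / d₀ with hM
    have hMpos : 0 < M := by positivity
    have hMd : M * d₀ = 4 := by rw [hM, div_mul_cancel₀ _ hd₀pos.ne']
    set g : ℝ → ℝ := fun p => h p * Real.exp (-(M * p)) with hg
    have hgmono : MonotoneOn g (Icc p₂ b) := by
      have hIcc : Icc p₂ b ⊆ Icc θ b := Icc_subset_Icc hθp₂.le le_rfl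
      have hgd : ∀ p ∈ Ioo p₂ b,
          HasDerivAt g ((-(4 * s) * q p - 2 * f p - 2 * K * (p - θ) - M * h p) *
            Real.exp (-(M * p))) p := by
        intro p hp
        have hpIoo : p ∈ Ioo θ b := ⟨lt_trans hθp₂ hp.1, hp.2⟩
        have h1 := hderiv p hpIoo
        have h2 : HasDerivAt (fun p => Real.exp (-(M * p))) (Real.exp (-(M * p)) * (-M)) p := by
          have : HasDerivAt (fun p : ℝ => -(M * p)) (-M) p := by
            simpa using (hasDerivAt_id p).const_mul (-M)
          exact this.exp
        have := h1.mul h2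
        refine HasDerivAt.congr_deriv (f := g) this ?_
        ring
      have hderivnn : ∀ p ∈ Ioo p₂ b, 0 ≤
          (-(4 * s) * q p - 2 * f p - 2 * K * (p - θ) - M * h p) * Real.exp (-(M * p)) := by
        intro p hp
        have hpIoo : p ∈ Ioo θ b := ⟨lt_trans hθp₂ hp.1, hp.2⟩
        have hqn : q p < 0 := hqneg p hpIoo
        have hhn : h p < 0 := hneg p hp
        have hfp : f p ≤ K * (p - θ) := hfK p ⟨hpIoo.1.le, hpIoo.2.le⟩
        have hw : 0 < q p + s * (p - θ) := by
          by_contra hc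
          push_neg at hc
          have h1 : s * (p - θ) ≤ -q p := by linarith
          have h2 : 0 ≤ s * (p - θ) := by
            have : 0 < p - θ := by linarith [hpIoo.1]
            positivity
          have := mul_le_mul h1 h1 h2 (by linarith)
          have hcontra : (s * (p - θ)) ^ 2 ≤ q p ^ 2 := by nlinarith
          have : h p ≥ 0 := by
            have : K * (p - θ) ^ 2 = (s * (p - θ)) ^ 2 := by nlinarith [hsK]
            simp only [hh]
            nlinarith
          linarith
        have hp₀p : p₀ ≤ p := le_trans hp₂A.1.1 hp.1.le
        have hMD : 4 * s ≤ M * (s * (p - θ) - q p) := by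
          have h1 : s * d₀ ≤ s * (p - θ) - q p := by
            have : s * d₀ ≤ s * (p - θ) := by
              apply mul_le_mul_of_nonneg_left _ hs.le
              simp [hd₀]; linarith
            linarith
          calc 4 * s = M * (s * d₀) := by rw [← mul_assoc, mul_comm M s, mul_assoc, hMd]; ring
          _ ≤ M * (s * (p - θ) - q p) := by
            apply mul_le_mul_of_nonneg_left h1 hMpos.le
        apply mul_nonneg _ (Real.exp_pos _).le
        have e1 : M * h p = -(M * ((s * (p - θ) - q p) * (q p + s * (p - θ)))) := by
          simp only [hh]
          linear_combination (M * (p - θ) ^ 2) * hsK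
        have e2 : 4 * s * (q p + s * (p - θ)) ≤
            M * ((s * (p - θ) - q p) * (q p + s * (p - θ))) := by
          calc 4 * s * (q p + s * (p - θ))
              ≤ (M * (s * (p - θ) - q p)) * (q p + s * (p - θ)) :=
                mul_le_mul_of_nonneg_right hMD hw.le
            _ = M * ((s * (p - θ) - q p) * (q p + s * (p - θ))) := by ring
        have e3 : 4 * s * (q p + s * (p - θ)) = 4 * s * q p + 4 * K * (p - θ) := by
          linear_combination (4 * (p - θ)) * hsK
        linarith [e1, e2, e3, hfp]
      apply monotoneOn_of_deriv_nonneg (convex_Icc p₂ b)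
      · apply ContinuousOn.mul (hcontA.mono hIcc)
        exact (Real.continuous_exp.comp (by continuity)).continuousOn
      · intro p hp
        rw [interior_Icc] at hp
        exact ((hgd p hp).differentiableAt).differentiableWithinAt
      · intro p hp
        rw [interior_Icc] at hp
        rw [(hgd p hp).deriv]
        exact hderivnn p hp
    have h1 : g p₂ ≤ g b :=
      hgmono ⟨le_refl _, hp₂b.le⟩ ⟨hp₂b.le, le_refl _⟩ hp₂b.le
    have h2 : 0 ≤ g p₂ := mul_nonneg hp₂A.2 (Real.exp_pos _).le
    have h3 : g b < 0 := mul_neg_of_neg_of_pos hbneg (Real.exp_pos _)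
    linarith
  have part1 : ∀ p ∈ Ioc θ b, -s * (p - θ) < q p := by
    intro p hp
    rcases eq_or_lt_of_le hp.2 with rfl | hpb
    · rw [hqb]
      have : 0 < s * (p - θ) := mul_pos hs (by linarith [hp.1])
      linarith
    · have hhp := hkey p ⟨hp.1, hpb⟩
      have hq2 : q p ^ 2 < (s * (p - θ)) ^ 2 := by
        have : K * (p - θ) ^ 2 = (s * (p - θ)) ^ 2 := by nlinarith [hsK]
        simp only [hh] at hhp
        nlinarith
      have ha : 0 < s * (p - θ) := mul_pos hs (by linarith [hp.1])
      by_contra hc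
      push_neg at hc
      have h2 : s * (p - θ) ≤ -q p := by linarith
      have h3 : (s * (p - θ)) * (s * (p - θ)) ≤ (-q p) * (-q p) :=
        mul_le_mul h2 h2 ha.le (by linarith)
      nlinarith [h3, hq2]
  refine ⟨part1, ?_⟩
  have hql : Tendsto q (𝓝[Ioo θ b] θ) (𝓝 (q θ)) :=
    (hqc θ (left_mem_Icc.mpr hθb.le)).mono_left (nhdsWithin_mono θ Ioo_subset_Icc_self)
  haveI : (𝓝[Ioo θ b] θ).NeBot := by
    apply mem_closure_iff_nhdsWithin_neBot.mp
    rw [closure_Ioo hθb.ne]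
    exact left_mem_Icc.mpr hθb.le
  have h0 : Tendsto q (𝓝[Ioo θ b] θ) (𝓝 0) := by
    apply tendsto_of_tendsto_of_tendsto_of_le_of_le' (g := fun p => -s * (p - θ))
      (h := fun _ : ℝ => (0 : ℝ))
    · have hc : Tendsto (fun p : ℝ => -s * (p - θ)) (𝓝 θ) (𝓝 (-s * (θ - θ))) :=
        (Continuous.tendsto (by continuity) θ)
      simpa using hc.mono_left nhdsWithin_le_nhds
    · exact tendsto_const_nhds
    · filter_upwards [eventually_mem_nhdsWithin] with p hp
      exact (part1 p ⟨hp.1, hp.2.le⟩).le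
    · filter_upwards [eventually_mem_nhdsWithin] with p hp
      exact (hqneg p hp).le
  exact tendsto_nhds_unique hql h0
end

section
/- Under hypotheses (H1)-(H3), any monotone traveling wave solution φ of u_t = u_xx + f(u) connecting two stable steady states θᵢ > θⱼ is compact: there exist finite Z₋ < Z₊ such that φ(z) = θᵢ for z ≤ Z₋ and φ(z) = θⱼ for z ≥ Z₊. -/
open Set Filter Topology

lemma aux_deriv_nonpos_of_antitone {f : ℝ → ℝ} {a x : ℝ} (hf : Antitone f)
    (h : HasDerivAt f a x) : a ≤ 0 := by
  have h1 : Tendsto (slope f x) (𝓝[>] x) (𝓝 a) :=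
    (hasDerivAt_iff_tendsto_slope.1 h).mono_left
      (nhdsWithin_mono _ fun y hy => ne_of_gt hy)
  refine le_of_tendsto h1 ?_
  filter_upwards [self_mem_nhdsWithin] with y hy
  rw [slope_def_field]
  exact div_nonpos_of_nonpos_of_nonneg (sub_nonpos.2 (hf (le_of_lt hy))) (sub_nonneg.2 (le_of_lt hy))

lemma aux_core {c m B Z0 : ℝ} (hm : 0 < m) {φ ψ : ℝ → ℝ}
    (hφ : ∀ z, HasDerivAt φ (ψ z) z)
    (hψd : ∀ z ≤ Z0, ∃ d, HasDerivAt ψ d z ∧ d ≤ -(c * ψ z) - m)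
    (hψ0 : ∀ z, ψ z ≤ 0)
    (hB : ∀ z ≤ Z0, φ z ≤ B) : False := by
  choose! D hD1 hD2 using hψd
  have hcontψ : ContinuousOn ψ (Iic Z0) := fun z hz =>
    ((hD1 z hz).continuousAt).continuousWithinAt
  rcases eq_or_ne c 0 with hc | hc
  · -- c = 0
    subst hc
    have hG : AntitoneOn (fun z => ψ z + m * z) (Iic Z0) := by
      apply antitoneOn_of_hasDerivWithinAt_nonpos (f' := fun z => D z + m) (convex_Iic Z0)
      · exact hcontψ.add (continuous_const.mul continuous_id).continuousOn
      · intro z hz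
        rw [interior_Iic] at hz
        have h1 : HasDerivAt (fun y => m * y) m z := by
          simpa using (hasDerivAt_id z).const_mul m
        exact ((hD1 z hz.le).add h1).hasDerivWithinAt
      · intro z hz
        rw [interior_Iic] at hz
        have := hD2 z hz.le
        simp only [zero_mul, neg_zero, zero_sub] at this
        linarith
    set z1 := Z0 - (1 - ψ Z0) / m with hz1def
    have hd : 0 ≤ (1 - ψ Z0) / m := div_nonneg (by linarith [hψ0 Z0]) hm.le
    have hz1 : z1 ≤ Z0 := by simp only [hz1def]; linarith
    have h2 := hG (mem_Iic.2 hz1) self_mem_Iic hz1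
    have hms : m * z1 = m * Z0 - (1 - ψ Z0) := by
      rw [hz1def, mul_sub, mul_div_cancel₀ _ hm.ne']
    have := hψ0 z1
    simp only at h2
    linarith
  · -- c ≠ 0
    set G := fun z => Real.exp (c * z) * (ψ z + m / c) with hGdef
    have hcm : c * (m / c) = m := mul_div_cancel₀ m hc
    have hGderiv : ∀ z ≤ Z0,
        HasDerivAt G (Real.exp (c * z) * c * (ψ z + m / c) + Real.exp (c * z) * D z) z := by
      intro z hz
      have hexp : HasDerivAt (fun y => Real.exp (c * y)) (Real.exp (c * z) * c) z := by
        simpa [Function.comp_def] using (Real.hasDerivAt_exp (c * z)).comp z ((hasDerivAt_id z).const_mul c)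
      exact hexp.mul ((hD1 z hz).add_const _)
    have hG : AntitoneOn G (Iic Z0) := by
      apply antitoneOn_of_hasDerivWithinAt_nonpos
        (f' := fun z => Real.exp (c * z) * c * (ψ z + m / c) + Real.exp (c * z) * D z)
        (convex_Iic Z0)
      · exact ((Real.continuous_exp.comp (continuous_const.mul continuous_id)).continuousOn).mul
          (hcontψ.add continuousOn_const)
      · intro z hz
        rw [interior_Iic] at hz
        exact (hGderiv z hz.le).hasDerivWithinAt
      · intro z hz
        rw [interior_Iic] at hz
        have h1 := hD2 z hz.le
        have he := (Real.exp_pos (c * z)).le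
        nlinarith [Real.exp_pos (c * z)]
    rcases hc.lt_or_gt with hcneg | hcpos
    · -- c < 0
      have htop : Tendsto (fun z : ℝ => c * z) atBot atTop :=
        (tendsto_const_mul_atTop_of_neg hcneg).2 tendsto_id
      have h1 : Tendsto (fun z => Real.exp (c * z) * (m / c)) atBot atBot :=
        (tendsto_mul_const_atBot_of_neg (div_neg_of_pos_of_neg hm hcneg)).2
          (Real.tendsto_exp_atTop.comp htop)
      obtain ⟨z, hza, hzb⟩ :=
        ((h1.eventually (eventually_lt_atBot (G Z0))).and (eventually_le_atBot Z0)).exists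
      have h3 := hG (mem_Iic.2 hzb) self_mem_Iic hzb
      have h4 : G z ≤ Real.exp (c * z) * (m / c) := by
        have := hψ0 z
        have := (Real.exp_pos (c * z)).le
        simp only [hGdef]
        nlinarith
      linarith
    · -- c > 0
      have key : ∀ Z ≤ Z0, ψ Z ≤ -(m / c) := by
        intro Z hZ
        have hbot : Tendsto (fun z : ℝ => c * z) atBot atBot :=
          (tendsto_const_mul_atBot_of_pos hcpos).2 tendsto_id
        have h0 : Tendsto (fun z => Real.exp (c * z) * (m / c)) atBot (𝓝 0) := by
          have := (Real.tendsto_exp_atBot.comp hbot).mul_const (m / c)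
          simpa using this
        have hGZ : G Z ≤ 0 := by
          refine ge_of_tendsto h0 ?_
          filter_upwards [eventually_le_atBot Z] with z hz
          have h3 := hG (mem_Iic.2 (hz.trans hZ)) (mem_Iic.2 hZ) hz
          have h4 : G z ≤ Real.exp (c * z) * (m / c) := by
            have := hψ0 z
            have := (Real.exp_pos (c * z)).le
            simp only [hGdef]
            nlinarith
          linarith
        have he := Real.exp_pos (c * Z)
        simp only [hGdef] at hGZ
        nlinarith
      set F := fun z => φ z + (m / c) * z with hFdef
      have hF : AntitoneOn F (Iic Z0) := by
        apply antitoneOn_of_hasDerivWithinAt_nonpos (f' := fun z => ψ z + m / c) (convex_Iic Z0)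
        · exact ContinuousOn.add (fun z _ => (hφ z).continuousAt.continuousWithinAt)
            ((continuous_const.mul continuous_id).continuousOn)
        · intro z hz
          rw [interior_Iic] at hz
          have h1 : HasDerivAt (fun y => (m / c) * y) (m / c) z := by
            simpa using (hasDerivAt_id z).const_mul (m / c)
          exact ((hφ z).add h1).hasDerivWithinAt
        · intro z hz
          rw [interior_Iic] at hz
          have := key z hz.le
          linarith
      set z2 := min Z0 ((F Z0 - B - 1) * (c / m)) with hz2def
      have hz2 : z2 ≤ Z0 := min_le_left _ _
      have h5 := hF (mem_Iic.2 hz2) self_mem_Iic hz2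
      have h6 : (m / c) * z2 ≤ F Z0 - B - 1 := by
        have hle : z2 ≤ (F Z0 - B - 1) * (c / m) := min_le_right _ _
        have hmc : 0 < m / c := div_pos hm hcpos
        calc (m / c) * z2 ≤ (m / c) * ((F Z0 - B - 1) * (c / m)) :=
              mul_le_mul_of_nonneg_left hle hmc.le
          _ = F Z0 - B - 1 := by field_simp
      have h7 := hB z2 hz2
      simp only [hFdef] at h5 h6
      linarith

lemma aux_gap_below (I : ℕ) (θ : ℕ → ℝ) (x : ℝ) :
    ∃ a < x, ∀ u ∈ Ioo a x, u ∉ StablePts I θ := by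
  classical
  set T' := (Finset.image (fun i => θ (2 * i)) (Finset.range (I + 1))).filter (· < x) with hT'
  by_cases h : T'.Nonempty
  · refine ⟨T'.max' h, (Finset.mem_filter.1 (T'.max'_mem h)).2, ?_⟩
    rintro u ⟨hu1, hu2⟩ ⟨i, hi, rfl⟩
    have hmem : θ (2 * i) ∈ T' := Finset.mem_filter.2
      ⟨Finset.mem_image.2 ⟨i, Finset.mem_range.2 (Nat.lt_succ_of_le hi), rfl⟩, hu2⟩
    exact absurd (Finset.le_max' T' _ hmem) (not_le.2 hu1)
  · refine ⟨x - 1, by linarith, ?_⟩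
    rintro u ⟨hu1, hu2⟩ ⟨i, hi, rfl⟩
    exact h ⟨θ (2 * i), Finset.mem_filter.2
      ⟨Finset.mem_image.2 ⟨i, Finset.mem_range.2 (Nat.lt_succ_of_le hi), rfl⟩, hu2⟩⟩

lemma aux_gap_above (I : ℕ) (θ : ℕ → ℝ) (x : ℝ) :
    ∃ b, x < b ∧ ∀ u ∈ Ioo x b, u ∉ StablePts I θ := by
  classical
  set T' := (Finset.image (fun i => θ (2 * i)) (Finset.range (I + 1))).filter (x < ·) with hT'
  by_cases h : T'.Nonempty
  · refine ⟨T'.min' h, (Finset.mem_filter.1 (T'.min'_mem h)).2, ?_⟩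
    rintro u ⟨hu1, hu2⟩ ⟨i, hi, rfl⟩
    have hmem : θ (2 * i) ∈ T' := Finset.mem_filter.2
      ⟨Finset.mem_image.2 ⟨i, Finset.mem_range.2 (Nat.lt_succ_of_le hi), rfl⟩, hu1⟩
    exact absurd (Finset.min'_le T' _ hmem) (not_le.2 hu2)
  · refine ⟨x + 1, by linarith, ?_⟩
    rintro u ⟨hu1, hu2⟩ ⟨i, hi, rfl⟩
    exact h ⟨θ (2 * i), Finset.mem_filter.2
      ⟨Finset.mem_image.2 ⟨i, Finset.mem_range.2 (Nat.lt_succ_of_le hi), rfl⟩, hu1⟩⟩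

/-- monotone traveling waves connecting stable states are compact:
they attain their limits in finite time. -/
theorem stmt8 (f : ℝ → ℝ) (I : ℕ) (θ : ℕ → ℝ)
    (hH1 : H1 f I θ) (hH2 : H2 f I θ) (hH3 : H3 f I θ)
    (θi θj c : ℝ) (φ : ℝ → ℝ)
    (hi : θi ∈ StablePts I θ) (hj : θj ∈ StablePts I θ) (hij : θj < θi)
    (hTW : IsTW f I θ c φ) (hmono : ConnectsMono φ θi θj) :
    ∃ Zm Zp : ℝ, Zm < Zp ∧ (∀ z ≤ Zm, φ z = θi) ∧ ∀ z : ℝ, Zp ≤ z → φ z = θj := by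
  obtain ⟨hsm, hTWd⟩ := hTW
  obtain ⟨hanti, hbot, htop⟩ := hmono
  set ψ := deriv φ with hψdef
  have hφψ : ∀ z, HasDerivAt φ (ψ z) z := fun z =>
    ((hsm.differentiable one_ne_zero) z).hasDerivAt
  have hψ0 : ∀ z, ψ z ≤ 0 := fun z => aux_deriv_nonpos_of_antitone hanti (hφψ z)
  have hub : ∀ z, φ z ≤ θi := fun z =>
    ge_of_tendsto hbot (eventually_atBot.2 ⟨z, fun w hw => hanti hw⟩)
  have hlb : ∀ z, θj ≤ φ z := fun z =>
    le_of_tendsto htop (eventually_atTop.2 ⟨z, fun w hw => hanti hw⟩)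
  have hA : ∃ z, φ z = θi := by
    by_contra hA
    push_neg at hA
    have hlt : ∀ z, φ z < θi := fun z => (hub z).lt_of_ne (hA z)
    obtain ⟨i, hiI, hθi⟩ := hi
    obtain ⟨Lm, Lp, hLm, _, hfm, _⟩ := hH3 i hiI
    rw [← hθi] at hfm
    have hev : ∀ᶠ u in 𝓝[<] θi, Lm / 2 < f u :=
      hfm.eventually (eventually_gt_nhds (by linarith))
    obtain ⟨a0, ha0, hsub⟩ := mem_nhdsLT_iff_exists_Ioo_subset.1 hev
    obtain ⟨a1, ha1, hgap⟩ := aux_gap_below I θ θi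
    set a := max a0 a1 with hadef
    have ha : a < θi := max_lt ha0 ha1
    obtain ⟨Z0, hZ0⟩ := eventually_atBot.1 (hbot.eventually (eventually_gt_nhds ha))
    refine aux_core (c := c) (Z0 := Z0) (B := θi)
      (by linarith : (0:ℝ) < Lm / 2) hφψ ?_ hψ0 (fun z _ => hub z)
    intro z hz
    have hmem1 : a < φ z := hZ0 z hz
    have hns : φ z ∉ StablePts I θ :=
      hgap _ ⟨lt_of_le_of_lt (le_max_right a0 a1) hmem1, hlt z⟩
    refine ⟨_, hTWd z hns, ?_⟩
    have hfb : Lm / 2 < f (φ z) :=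
      hsub ⟨lt_of_le_of_lt (le_max_left a0 a1) hmem1, hlt z⟩
    linarith
  have hBe : ∃ z, φ z = θj := by
    by_contra hB2
    push_neg at hB2
    have hgt : ∀ z, θj < φ z := fun z => (hlb z).lt_of_ne fun h => hB2 z h.symm
    obtain ⟨jn, hjI, hθj⟩ := hj
    obtain ⟨Lm', Lp, _, hLp, _, hfp⟩ := hH3 jn hjI
    rw [← hθj] at hfp
    have hev : ∀ᶠ u in 𝓝[>] θj, f u < Lp / 2 :=
      hfp.eventually (eventually_lt_nhds (by linarith))
    obtain ⟨b0, hb0, hsub⟩ := mem_nhdsGT_iff_exists_Ioo_subset.1 hev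
    obtain ⟨b1, hb1, hgap⟩ := aux_gap_above I θ θj
    set b := min b0 b1 with hbdef
    have hb : θj < b := lt_min hb0 hb1
    obtain ⟨Z1, hZ1⟩ := eventually_atTop.1 (htop.eventually (eventually_lt_nhds hb))
    have hφψ' : ∀ z, HasDerivAt (fun y => -φ (-y)) (ψ (-z)) z := by
      intro z
      have h1 := ((hφψ (-z)).comp z (hasDerivAt_neg z)).neg
      exact h1.congr_deriv (by ring)
    refine aux_core (c := -c) (Z0 := -Z1) (B := -θj)
      (by linarith : (0:ℝ) < -(Lp / 2)) hφψ' ?_ (fun z => hψ0 (-z))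
      (fun z _ => neg_le_neg (hlb (-z)))
    intro z hz
    have hZ : Z1 ≤ -z := by linarith
    have hmem2 : φ (-z) < b := hZ1 _ hZ
    have hns : φ (-z) ∉ StablePts I θ :=
      hgap _ ⟨hgt _, lt_of_lt_of_le hmem2 (min_le_right _ _)⟩
    have hd : HasDerivAt (fun y => ψ (-y))
        ((-(c * ψ (-z)) - f (φ (-z))) * (-1)) z :=
      (hTWd (-z) hns).comp z (hasDerivAt_neg z)
    refine ⟨_, hd, ?_⟩
    have hfb : f (φ (-z)) < Lp / 2 :=
      hsub ⟨hgt _, lt_of_lt_of_le hmem2 (min_le_left _ _)⟩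
    nlinarith
  obtain ⟨z0, hz0⟩ := hA
  obtain ⟨z1, hz1⟩ := hBe
  have hz01 : z0 < z1 := by
    by_contra h
    push_neg at h
    have := hanti h
    rw [hz0, hz1] at this
    linarith
  exact ⟨z0, z1, hz01,
    fun z hz => le_antisymm (hub z) (hz0 ▸ hanti hz),
    fun z hz => le_antisymm (hz1 ▸ hanti hz) (hlb z)⟩
end

section
/- Let f satisfy (H1)-(H3), p_u a stable steady state, and for each c let p_l(c) be the terminal point of the trajectory from Proposition on phase-plane trajectories. If c₂ < c₁ then p_l(c₂) ≤ p_l(c₁); i.e., p_l is a nondecreasing function of c. -/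
open Set Filter Topology

/-- Antitone from nonpositive derivative off a finite exceptional set. -/
lemma antitone_aux (g : ℝ → ℝ) (S : Finset ℝ) :
    ∀ a b : ℝ, ContinuousOn g (Icc a b) →
      (∀ x ∈ Ioo a b, x ∉ S → ∃ g', HasDerivAt g g' x ∧ g' ≤ 0) →
      AntitoneOn g (Icc a b) := by
  classical
  induction S using Finset.induction_on with
  | empty =>
    intro a b hg hd
    have h1 : DifferentiableOn ℝ g (interior (Icc a b)) := by
      intro x hx
      rw [interior_Icc] at hx
      obtain ⟨g', hg', _⟩ := hd x hx (Finset.notMem_empty x)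
      exact hg'.differentiableAt.differentiableWithinAt
    refine antitoneOn_of_deriv_nonpos (convex_Icc a b) hg h1 ?_
    intro x hx
    rw [interior_Icc] at hx
    obtain ⟨g', hg', hle⟩ := hd x hx (Finset.notMem_empty x)
    rwa [hg'.deriv]
  | @insert x₀ S' hx₀ ih =>
    intro a b hg hd
    by_cases hmem : x₀ ∈ Ioo a b
    · have h1 : AntitoneOn g (Icc a x₀) := by
        refine ih a x₀ (hg.mono (Icc_subset_Icc le_rfl hmem.2.le)) ?_
        intro x hx hxS
        refine hd x ⟨hx.1, hx.2.trans hmem.2⟩ ?_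
        simp only [Finset.mem_insert, not_or]
        exact ⟨ne_of_lt hx.2, hxS⟩
      have h2 : AntitoneOn g (Icc x₀ b) := by
        refine ih x₀ b (hg.mono (Icc_subset_Icc hmem.1.le le_rfl)) ?_
        intro x hx hxS
        refine hd x ⟨hmem.1.trans hx.1, hx.2⟩ ?_
        simp only [Finset.mem_insert, not_or]
        exact ⟨(ne_of_lt hx.1).symm, hxS⟩
      have h3 := h1.union_right h2 (isGreatest_Icc hmem.1.le) (isLeast_Icc hmem.2.le)
      rwa [Icc_union_Icc_eq_Icc hmem.1.le hmem.2.le] at h3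
    · refine ih a b hg ?_
      intro x hx hxS
      refine hd x hx ?_
      simp only [Finset.mem_insert, not_or]
      exact ⟨fun h => hmem (h ▸ hx), hxS⟩



set_option maxHeartbeats 1000000 in
/-- the terminal point `p_l` of the trajectory is nondecreasing in `c`. -/
theorem stmt11 (f : ℝ → ℝ) (I : ℕ) (θ : ℕ → ℝ)
    (hH1 : H1 f I θ) (hH2 : H2 f I θ) (hH3 : H3 f I θ)
    (pu : ℝ) (hpu : pu ∈ StablePts I θ) (hpupos : 0 < pu)
    (c₁ c₂ pl₁ pl₂ : ℝ) (q₁ q₂ : ℝ → ℝ)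
    (h₁ : Traj f I θ c₁ pu pl₁ q₁) (h₂ : Traj f I θ c₂ pu pl₂ q₂)
    (hc : c₂ < c₁) : pl₂ ≤ pl₁ := by
  classical
  by_contra hcon'
  push_neg at hcon'
  have hcon : pl₁ < pl₂ := hcon'
  obtain ⟨hm₁, hq₁cont, hq₁pu, hq₁neg, hq₁ode, hq₁l, -⟩ := h₁
  obtain ⟨hm₂, hq₂cont, hq₂pu, hq₂neg, hq₂ode, hq₂l, -⟩ := h₂
  have hpl₁0 : (0:ℝ) ≤ pl₁ := hm₁.1
  have hpl₁pu : pl₁ < pu := hm₁.2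
  have hpl₂pu : pl₂ < pu := hm₂.2
  have hpl₂0 : 0 < pl₂ := lt_of_le_of_lt hpl₁0 hcon
  have hq₂pl₂ : q₂ pl₂ = 0 := hq₂l hpl₂0
  have hq₁pl₂ : q₁ pl₂ < 0 := hq₁neg pl₂ ⟨hcon, hpl₂pu⟩
  set SF : Finset ℝ := Finset.image (fun i => θ (2*i)) (Finset.Iic I) with hSF
  have hSFspec : ∀ x : ℝ, x ∉ SF → x ∉ StablePts I θ := by
    intro x hx hxS
    obtain ⟨i, hiI, rfl⟩ := hxS
    exact hx (Finset.mem_image.2 ⟨i, Finset.mem_Iic.2 hiI, rfl⟩)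
  set w : ℝ → ℝ := fun p => (q₂ p * q₂ p - q₁ p * q₁ p) / 2 with hw
  have hwcont : ContinuousOn w (Icc pl₂ pu) := by
    have h1 : ContinuousOn q₁ (Icc pl₂ pu) := hq₁cont.mono (Icc_subset_Icc hcon.le le_rfl)
    exact ((hq₂cont.mul hq₂cont).sub (h1.mul h1)).div_const 2
  have hwpl₂ : w pl₂ < 0 := by
    simp only [hw, hq₂pl₂]
    nlinarith [mul_pos (neg_pos.2 hq₁pl₂) (neg_pos.2 hq₁pl₂)]
  have hwpu : w pu = 0 := by simp [hw, hq₁pu, hq₂pu]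
  -- key derivative and differential inequality
  have hkey : ∀ x ∈ Ioo pl₂ pu, x ∉ StablePts I θ → w x < 0 →
      HasDerivAt w (c₁ * q₁ x - c₂ * q₂ x) x ∧
      c₁ * q₁ x - c₂ * q₂ x ≤ |c₂| * ((q₁ x * q₁ x - q₂ x * q₂ x) / (-(q₁ x))) := by
    intro x hx hxS hwx
    have hx₁ : x ∈ Ioo pl₁ pu := ⟨hcon.trans hx.1, hx.2⟩
    have hq1 : q₁ x < 0 := hq₁neg x hx₁
    have hq2 : q₂ x < 0 := hq₂neg x hx
    have hq1ne : q₁ x ≠ 0 := ne_of_lt hq1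
    have hq2ne : q₂ x ≠ 0 := ne_of_lt hq2
    have d₁ := hq₁ode x hx₁ hxS
    have d₂ := hq₂ode x hx hxS
    have hD := ((d₂.mul d₂).sub (d₁.mul d₁)).div_const 2
    have heq : ((-c₂ - f x / q₂ x) * q₂ x + q₂ x * (-c₂ - f x / q₂ x) -
        ((-c₁ - f x / q₁ x) * q₁ x + q₁ x * (-c₁ - f x / q₁ x))) / 2
        = c₁ * q₁ x - c₂ * q₂ x := by
      field_simp
      ring
    rw [heq] at hD
    refine ⟨hD, ?_⟩
    have hwx' : q₂ x * q₂ x - q₁ x * q₁ x < 0 := by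
      simp only [hw] at hwx; linarith
    have hq12 : q₁ x < q₂ x := by nlinarith
    have step1 : c₁ * q₁ x - c₂ * q₂ x ≤ |c₂| * (q₂ x - q₁ x) := by
      have h1 : (c₁ - c₂) * q₁ x < 0 := mul_neg_of_pos_of_neg (by linarith) hq1
      have h2 : c₂ * (q₁ x - q₂ x) ≤ |c₂| * (q₂ x - q₁ x) := by
        calc c₂ * (q₁ x - q₂ x) ≤ |c₂ * (q₁ x - q₂ x)| := le_abs_self _
          _ = |c₂| * (q₂ x - q₁ x) := by
              rw [abs_mul, abs_of_neg (by linarith : q₁ x - q₂ x < 0)]; ring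
      nlinarith [h1, h2]
    have step2 : q₂ x - q₁ x ≤ (q₁ x * q₁ x - q₂ x * q₂ x) / (-(q₁ x)) := by
      rw [le_div_iff₀ (by linarith : (0:ℝ) < -q₁ x)]
      nlinarith [mul_pos (neg_pos.2 hq2) (sub_pos.2 hq12)]
    calc c₁ * q₁ x - c₂ * q₂ x ≤ |c₂| * (q₂ x - q₁ x) := step1
      _ ≤ |c₂| * ((q₁ x * q₁ x - q₂ x * q₂ x) / (-(q₁ x))) :=
          mul_le_mul_of_nonneg_left step2 (abs_nonneg _)
  -- the first touching point
  set T : Set ℝ := {p | p ∈ Icc pl₂ pu ∧ 0 ≤ w p} with hT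
  have hTpu : pu ∈ T := ⟨⟨hpl₂pu.le, le_rfl⟩, hwpu.ge⟩
  have hTbdd : BddBelow T := ⟨pl₂, fun p hp => hp.1.1⟩
  have hTclosed : IsClosed T := by
    have hTeq : T = Icc pl₂ pu ∩ w ⁻¹' Ici 0 := by
      ext p; simp only [hT, Set.mem_setOf_eq, Set.mem_inter_iff, Set.mem_preimage, Set.mem_Ici]
    rw [hTeq]
    exact hwcont.preimage_isClosed_of_isClosed isClosed_Icc isClosed_Ici
  set p₀ := sInf T with hp₀
  have hp₀T : p₀ ∈ T := hTclosed.csInf_mem ⟨pu, hTpu⟩ hTbdd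
  have hp₀mem : p₀ ∈ Icc pl₂ pu := hp₀T.1
  have hwp₀ : 0 ≤ w p₀ := hp₀T.2
  have hp₀gt : pl₂ < p₀ := by
    rcases eq_or_lt_of_le hp₀mem.1 with h | h
    · exact absurd (h ▸ hwp₀) (not_le.2 hwpl₂)
    · exact h
  have hbefore : ∀ p, pl₂ ≤ p → p < p₀ → w p < 0 := by
    intro p hp1 hp2
    by_contra hge
    push_neg at hge
    exact absurd (csInf_le hTbdd ⟨⟨hp1, le_of_lt (lt_of_lt_of_le hp2 hp₀mem.2)⟩, hge⟩)
      (not_le.2 hp2)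
  rcases lt_or_eq_of_le hp₀mem.2 with hp₀lt | hp₀eq
  -- CASE A : p₀ < pu
  · obtain ⟨x₀, hx₀mem, hx₀max⟩ :=
      (isCompact_Icc (a := pl₂) (b := p₀)).exists_isMaxOn ⟨pl₂, le_rfl, hp₀gt.le⟩
        (hq₁cont.mono (Icc_subset_Icc hcon.le hp₀mem.2))
    have hx₀Ioo : x₀ ∈ Ioo pl₁ pu :=
      ⟨lt_of_lt_of_le hcon hx₀mem.1, lt_of_le_of_lt hx₀mem.2 hp₀lt⟩
    set m : ℝ := -(q₁ x₀) with hm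
    have hmpos : 0 < m := neg_pos.2 (hq₁neg x₀ hx₀Ioo)
    set K : ℝ := 2 * |c₂| / m with hK
    have hanti : AntitoneOn (fun p => w p * Real.exp (K * p)) (Icc pl₂ p₀) := by
      refine antitone_aux _ SF pl₂ p₀
        ((hwcont.mono (Icc_subset_Icc le_rfl hp₀mem.2)).mul
          (Real.continuous_exp.comp (continuous_const.mul continuous_id)).continuousOn) ?_
      intro x hx hxS
      have hxIoo : x ∈ Ioo pl₂ pu := ⟨hx.1, lt_of_lt_of_le hx.2 hp₀mem.2⟩
      have hwx : w x < 0 := hbefore x hx.1.le hx.2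
      obtain ⟨hD, hDle⟩ := hkey x hxIoo (hSFspec x hxS) hwx
      have hexp : HasDerivAt (fun p => Real.exp (K * p)) (Real.exp (K * x) * (K * 1)) x :=
        ((hasDerivAt_id x).const_mul K).exp
      refine ⟨_, hD.mul hexp, ?_⟩
      have hE : 0 < Real.exp (K * x) := Real.exp_pos _
      have hq1 : q₁ x < 0 := hq₁neg x ⟨hcon.trans hx.1, hxIoo.2⟩
      have hmle : m ≤ -(q₁ x) :=
        neg_le_neg (hx₀max (show x ∈ Icc pl₂ p₀ from ⟨hx.1.le, hx.2.le⟩))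
      have hnum : 0 ≤ q₁ x * q₁ x - q₂ x * q₂ x := by
        simp only [hw] at hwx; linarith
      have hstep : (q₁ x * q₁ x - q₂ x * q₂ x) / (-(q₁ x)) ≤ (q₁ x * q₁ x - q₂ x * q₂ x) / m :=
        div_le_div_of_nonneg_left hnum hmpos hmle
      have h2 : |c₂| * ((q₁ x * q₁ x - q₂ x * q₂ x) / m) = -(K * w x) := by
        simp only [hw, hK]
        field_simp
        ring
      have hbound : c₁ * q₁ x - c₂ * q₂ x ≤ -(K * w x) := by
        calc c₁ * q₁ x - c₂ * q₂ x
            ≤ |c₂| * ((q₁ x * q₁ x - q₂ x * q₂ x) / (-(q₁ x))) := hDle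
          _ ≤ |c₂| * ((q₁ x * q₁ x - q₂ x * q₂ x) / m) :=
              mul_le_mul_of_nonneg_left hstep (abs_nonneg _)
          _ = -(K * w x) := h2
      have hfin := mul_le_mul_of_nonneg_right
        (show c₁ * q₁ x - c₂ * q₂ x + K * w x ≤ 0 by linarith) hE.le
      nlinarith [hfin]
    have h1 := hanti (show pl₂ ∈ Icc pl₂ p₀ from ⟨le_rfl, hp₀gt.le⟩)
      (show p₀ ∈ Icc pl₂ p₀ from ⟨hp₀gt.le, le_rfl⟩) hp₀gt.le
    simp only at h1
    have hA : 0 ≤ w p₀ * Real.exp (K * p₀) := mul_nonneg hwp₀ (Real.exp_pos _).le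
    have hB : w pl₂ * Real.exp (K * pl₂) < 0 := mul_neg_of_neg_of_pos hwpl₂ (Real.exp_pos _)
    linarith
  -- CASE B : p₀ = pu
  · obtain ⟨i, hiI, hpuθ⟩ := hpu
    obtain ⟨Lm, Lp, hLm, hLp, hleft, -⟩ := hH3 i hiI
    rw [← hpuθ] at hleft
    have hev : ∀ᶠ p in 𝓝[<] pu, Lm/2 < f p :=
      hleft.eventually (eventually_gt_nhds (by linarith))
    obtain ⟨a₁, ha₁, hfge⟩ := mem_nhdsLT_iff_exists_Ioo_subset.1 hev
    set ε : ℝ := Lm / (4 * (|c₁| + 1)) with hε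
    have hεpos : 0 < ε := by positivity
    have hten : Tendsto q₁ (𝓝[Icc pl₁ pu] pu) (𝓝 0) := by
      rw [← hq₁pu]; exact hq₁cont pu ⟨hpl₁pu.le, le_rfl⟩
    obtain ⟨δ₂, hδ₂pos, hδ₂⟩ := Metric.tendsto_nhdsWithin_nhds.1 hten ε hεpos
    set a : ℝ := max ((pl₂ + pu)/2) (max a₁ (pu - δ₂/2)) with ha
    have hapl₂ : pl₂ < a := lt_of_lt_of_le (by linarith) (le_max_left _ _)
    have hapu : a < pu := max_lt (by linarith) (max_lt ha₁ (by linarith))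
    have ha₁a : a₁ ≤ a := le_trans (le_max_left _ _) (le_max_right _ _)
    have hδa : pu - δ₂/2 ≤ a := le_trans (le_max_right _ _) (le_max_right _ _)
    have hfb : ∀ p ∈ Ioo a pu, Lm/2 < f p := by
      intro p hp
      exact hfge ⟨lt_of_le_of_lt ha₁a hp.1, hp.2⟩
    have hq₁small : ∀ p ∈ Ioo a pu, |q₁ p| < ε := by
      intro p hp
      have hpmem : p ∈ Icc pl₁ pu := ⟨by linarith [hp.1], hp.2.le⟩
      have hdist : dist p pu < δ₂ := by
        rw [Real.dist_eq, abs_of_nonpos (by linarith [hp.2] : p - pu ≤ 0)]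
        linarith [hp.1]
      have hgot := hδ₂ hpmem hdist
      rwa [Real.dist_eq, sub_zero] at hgot
    -- lower bound on |q₁| near pu
    have hg₁anti : AntitoneOn (fun p => q₁ p * q₁ p / 2 + (Lm/4) * p) (Icc a pu) := by
      refine antitone_aux _ SF a pu ?_ ?_
      · have h1 : ContinuousOn q₁ (Icc a pu) :=
          hq₁cont.mono (Icc_subset_Icc (by linarith) le_rfl)
        exact ((h1.mul h1).div_const 2).add (continuous_const.mul continuous_id).continuousOn
      · intro x hx hxS
        have hxIoo : x ∈ Ioo pl₁ pu := ⟨by linarith [hx.1], hx.2⟩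
        have hq1 : q₁ x < 0 := hq₁neg x hxIoo
        have hq1ne : q₁ x ≠ 0 := ne_of_lt hq1
        have d₁ := hq₁ode x hxIoo (hSFspec x hxS)
        refine ⟨_, ((d₁.mul d₁).div_const 2).add ((hasDerivAt_id x).const_mul (Lm/4)), ?_⟩
        have hfx : Lm/2 < f x := hfb x hx
        have hqs : |q₁ x| < ε := hq₁small x hx
        have heq : ((-c₁ - f x / q₁ x) * q₁ x + q₁ x * (-c₁ - f x / q₁ x)) / 2 + Lm/4 * 1
            = -(c₁ * q₁ x) - f x + Lm/4 := by
          field_simp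
          ring
        rw [heq]
        have h1 : -(c₁ * q₁ x) ≤ |c₁| * ε := by
          calc -(c₁ * q₁ x) ≤ |c₁ * q₁ x| := neg_le_abs _
            _ = |c₁| * |q₁ x| := abs_mul _ _
            _ ≤ |c₁| * ε := mul_le_mul_of_nonneg_left hqs.le (abs_nonneg _)
        have hne : (|c₁| + 1) ≠ 0 := by positivity
        have h4 : (|c₁| + 1) * (Lm / (4 * (|c₁| + 1))) = Lm/4 := by
          field_simp
        have h2 : |c₁| * ε ≤ Lm/4 := by
          rw [hε]
          calc |c₁| * (Lm / (4 * (|c₁| + 1)))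
              ≤ (|c₁| + 1) * (Lm / (4 * (|c₁| + 1))) :=
                mul_le_mul_of_nonneg_right (by linarith) (by positivity)
            _ = Lm/4 := h4
        linarith
    have hq₁lb : ∀ p ∈ Icc a pu, Real.sqrt (Lm/2 * (pu - p)) ≤ -(q₁ p) := by
      intro p hp
      have h1 := hg₁anti hp ⟨hapu.le, le_rfl⟩ hp.2
      simp only at h1
      rw [hq₁pu] at h1
      have h3 : q₁ p ≤ 0 := by
        rcases eq_or_lt_of_le hp.2 with heqq | hlt
        · simp [heqq, hq₁pu]
        · exact (hq₁neg p ⟨by linarith [hp.1], hlt⟩).le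
      have h2 : Lm/2 * (pu - p) ≤ (-(q₁ p)) * (-(q₁ p)) := by nlinarith [h1]
      calc Real.sqrt (Lm/2 * (pu - p)) ≤ Real.sqrt ((-(q₁ p)) * (-(q₁ p))) :=
            Real.sqrt_le_sqrt h2
        _ = -(q₁ p) := Real.sqrt_mul_self (by linarith)
    set A' : ℝ := 2 * |c₂| / Real.sqrt (Lm/2) with hA'
    have hsL : 0 < Real.sqrt (Lm/2) := Real.sqrt_pos.2 (by linarith)
    have hGanti : AntitoneOn (fun p => w p * Real.exp (-(2*A') * Real.sqrt (pu - p)))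
        (Icc a pu) := by
      refine antitone_aux _ SF a pu
        ((hwcont.mono (Icc_subset_Icc hapl₂.le le_rfl)).mul
          (Real.continuous_exp.comp
            (continuous_const.mul ((continuous_const.sub continuous_id).sqrt))).continuousOn) ?_
      intro x hx hxS
      have hxIoo₂ : x ∈ Ioo pl₂ pu := ⟨hapl₂.trans hx.1, hx.2⟩
      have hwx : w x < 0 := hbefore x hxIoo₂.1.le (by rw [hp₀eq]; exact hx.2)
      obtain ⟨hD, hDle⟩ := hkey x hxIoo₂ (hSFspec x hxS) hwx
      have hpux : 0 < pu - x := by linarith [hx.2]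
      have hs : 0 < Real.sqrt (pu - x) := Real.sqrt_pos.2 hpux
      have hinner : HasDerivAt (fun p : ℝ => pu - p) (0 - 1) x :=
        (hasDerivAt_const x pu).sub (hasDerivAt_id x)
      have hsq : HasDerivAt (fun p => Real.sqrt (pu - p))
          ((0 - 1) / (2 * Real.sqrt (pu - x))) x :=
        hinner.sqrt (ne_of_gt hpux)
      have hexp : HasDerivAt (fun p => Real.exp (-(2*A') * Real.sqrt (pu - p)))
          (Real.exp (-(2*A') * Real.sqrt (pu - x)) *
            (-(2*A') * ((0 - 1) / (2 * Real.sqrt (pu - x))))) x :=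
        (hsq.const_mul (-(2*A'))).exp
      refine ⟨_, hD.mul hexp, ?_⟩
      have hq1 : q₁ x < 0 := hq₁neg x ⟨hcon.trans hxIoo₂.1, hx.2⟩
      have hnum : 0 ≤ q₁ x * q₁ x - q₂ x * q₂ x := by
        simp only [hw] at hwx; linarith
      have hlb : Real.sqrt (Lm/2) * Real.sqrt (pu - x) ≤ -(q₁ x) := by
        have hgot := hq₁lb x ⟨hx.1.le, hx.2.le⟩
        rwa [Real.sqrt_mul (by linarith : (0:ℝ) ≤ Lm/2)] at hgot
      have hprod : 0 < Real.sqrt (Lm/2) * Real.sqrt (pu - x) := mul_pos hsL hs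
      have hstep : (q₁ x * q₁ x - q₂ x * q₂ x) / (-(q₁ x)) ≤
          (q₁ x * q₁ x - q₂ x * q₂ x) / (Real.sqrt (Lm/2) * Real.sqrt (pu - x)) :=
        div_le_div_of_nonneg_left hnum hprod hlb
      have heq2 : |c₂| * ((q₁ x * q₁ x - q₂ x * q₂ x) /
            (Real.sqrt (Lm/2) * Real.sqrt (pu - x)))
          = -(A' * w x / Real.sqrt (pu - x)) := by
        simp only [hw, hA']
        field_simp
        ring
      have hbound : c₁ * q₁ x - c₂ * q₂ x ≤ -(A' * w x / Real.sqrt (pu - x)) := by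
        calc c₁ * q₁ x - c₂ * q₂ x
            ≤ |c₂| * ((q₁ x * q₁ x - q₂ x * q₂ x) / (-(q₁ x))) := hDle
          _ ≤ |c₂| * ((q₁ x * q₁ x - q₂ x * q₂ x) /
                (Real.sqrt (Lm/2) * Real.sqrt (pu - x))) :=
              mul_le_mul_of_nonneg_left hstep (abs_nonneg _)
          _ = -(A' * w x / Real.sqrt (pu - x)) := heq2
      have hE : 0 < Real.exp (-(2*A') * Real.sqrt (pu - x)) := Real.exp_pos _
      have hco : (-(2*A')) * ((0 - 1) / (2 * Real.sqrt (pu - x)))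
          = A' / Real.sqrt (pu - x) := by
        field_simp
        ring
      rw [hco]
      have hfin := mul_le_mul_of_nonneg_right
        (show c₁ * q₁ x - c₂ * q₂ x + A' * w x / Real.sqrt (pu - x) ≤ 0 by linarith)
        hE.le
      have hexpand : (c₁ * q₁ x - c₂ * q₂ x + A' * w x / Real.sqrt (pu - x)) *
            Real.exp (-(2*A') * Real.sqrt (pu - x))
          = (c₁ * q₁ x - c₂ * q₂ x) * Real.exp (-(2*A') * Real.sqrt (pu - x)) +
            w x * (Real.exp (-(2*A') * Real.sqrt (pu - x)) * (A' / Real.sqrt (pu - x))) := by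
        ring
      rw [hexpand] at hfin
      linarith
    have h1 := hGanti (show a ∈ Icc a pu from ⟨le_rfl, hapu.le⟩)
      (show pu ∈ Icc a pu from ⟨hapu.le, le_rfl⟩) hapu.le
    simp only at h1
    rw [hwpu, zero_mul] at h1
    have hwa : w a < 0 := hbefore a hapl₂.le (by rw [hp₀eq]; exact hapu)
    have h2 : w a * Real.exp (-(2*A') * Real.sqrt (pu - a)) < 0 :=
      mul_neg_of_neg_of_pos hwa (Real.exp_pos _)
    linarith
end

section
/- Let f satisfy (H1)-(H3) and p_u a stable steady state. There exists C₁ ∈ ℝ such that for all c ≤ C₁ the trajectory q(·; c) reaches the vertical axis before the horizontal axis: p_l(c) = 0 and q(0; c) < 0. -/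
open Set Filter Topology

section Aux

open MeasureTheory

variable {f : ℝ → ℝ} {I : ℕ} {θ : ℕ → ℝ}

lemma stablePts_countable (I : ℕ) (θ : ℕ → ℝ) : (StablePts I θ).Countable := by
  have hsub : StablePts I θ ⊆ (fun i => θ (2 * i)) '' (Set.Iic I) := by
    rintro x ⟨i, hi, rfl⟩
    exact ⟨i, hi, rfl⟩
  exact ((Set.to_countable _).image _).mono hsub

lemma continuousAt_of_H2 (hH2 : H2 f I θ) {x : ℝ} (hx : x ∉ StablePts I θ) :
    ContinuousAt f x := by
  obtain ⟨ε, hε, hC, -⟩ := hH2 x hx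
  exact hC.continuousOn.continuousAt (Metric.ball_mem_nhds x hε)

lemma loc_bdd_of_H2_H3 (hH2 : H2 f I θ) (hH3 : H3 f I θ) (x : ℝ) :
    ∃ M : ℝ, ∀ᶠ y in 𝓝 x, |f y| ≤ M := by
  by_cases hx : x ∈ StablePts I θ
  · obtain ⟨i, hi, rfl⟩ := hx
    obtain ⟨Lm, Lp, -, -, hLm, hLp⟩ := hH3 i hi
    set x := θ (2 * i)
    refine ⟨max (max (|Lm| + 1) (|Lp| + 1)) (|f x|), ?_⟩
    have e1 : ∀ᶠ y in 𝓝[<] x, |f y| ≤ max (max (|Lm| + 1) (|Lp| + 1)) (|f x|) := by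
      filter_upwards [hLm.abs.eventually_le_const (lt_add_one _)] with y hy
      exact hy.trans (le_max_of_le_left (le_max_left _ _))
    have e2 : ∀ᶠ y in 𝓝[>] x, |f y| ≤ max (max (|Lm| + 1) (|Lp| + 1)) (|f x|) := by
      filter_upwards [hLp.abs.eventually_le_const (lt_add_one _)] with y hy
      exact hy.trans (le_max_of_le_left (le_max_right _ _))
    have e3 : ∀ᶠ y in pure x, |f y| ≤ max (max (|Lm| + 1) (|Lp| + 1)) (|f x|) := by
      simp only [eventually_pure]
      exact le_max_right _ _
    have hsplit : 𝓝 x = 𝓝[<] x ⊔ (pure x ⊔ 𝓝[>] x) := by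
      rw [← nhdsWithin_singleton, ← nhdsWithin_union, ← nhdsWithin_union]
      rw [show Iio x ∪ ({x} ∪ Ioi x) = Set.univ from ?_, nhdsWithin_univ]
      ext y
      rcases lt_trichotomy y x with h | h | h <;> simp [h]
    rw [hsplit]
    rw [eventually_sup, eventually_sup]
    exact ⟨e1, e3, e2⟩
  · refine ⟨|f x| + 1, ?_⟩
    exact (continuousAt_of_H2 hH2 hx).abs.eventually_le_const (lt_add_one _)

lemma bdd_of_H2_H3 (hH2 : H2 f I θ) (hH3 : H3 f I θ) (pu : ℝ) :
    ∃ M : ℝ, 0 ≤ M ∧ ∀ x ∈ Icc (0 : ℝ) pu, |f x| ≤ M := by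
  choose M hM using loc_bdd_of_H2_H3 hH2 hH3
  obtain ⟨t, -, ht⟩ := (isCompact_Icc (a := (0:ℝ)) (b := pu)).elim_nhds_subcover
    (fun x => {y | |f y| ≤ M x}) (fun x _ => hM x)
  obtain ⟨B, hB⟩ := (t.image M).exists_le
  refine ⟨max B 0, le_max_right _ _, fun x hx => ?_⟩
  obtain ⟨y, hyt, hxy⟩ := Set.mem_iUnion₂.mp (ht hx)
  exact hxy.trans ((hB _ (Finset.mem_image_of_mem M hyt)).trans (le_max_left _ _))

lemma f_intervalIntegrable (hH2 : H2 f I θ) {pu M : ℝ}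
    (hbd : ∀ x ∈ Icc (0 : ℝ) pu, |f x| ≤ M)
    {pl : ℝ} (h0 : 0 ≤ pl) (h1 : pl ≤ pu) : IntervalIntegrable f volume pl pu := by
  rw [intervalIntegrable_iff_integrableOn_Ioc_of_le h1]
  have hS := stablePts_countable I θ
  have hmeas : AEStronglyMeasurable f (volume.restrict (Ioc pl pu)) := by
    have hcont : ContinuousOn f ((Ioc pl pu) \ StablePts I θ) := fun x hx =>
      (continuousAt_of_H2 hH2 hx.2).continuousWithinAt
    have hAE := hcont.aestronglyMeasurable (μ := volume) (measurableSet_Ioc.diff hS.measurableSet)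
    have hze : volume (Ioc pl pu ∩ StablePts I θ) = 0 :=
      measure_mono_null Set.inter_subset_right (hS.measure_zero _)
    have heq : (Ioc pl pu \ StablePts I θ : Set ℝ) =ᵐ[volume] Ioc pl pu :=
      diff_ae_eq_self.mpr hze
    rwa [Measure.restrict_congr_set heq] at hAE
  refine Integrable.mono' (integrable_const M) hmeas ?_
  rw [ae_restrict_iff' measurableSet_Ioc]
  exact ae_of_all _ fun x hx => by
    simpa [Real.norm_eq_abs] using hbd x ⟨h0.trans hx.1.le, hx.2⟩

end Aux

open MeasureTheory

set_option maxHeartbeats 1000000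

/-- for all sufficiently negative speeds, the trajectory reaches the
vertical axis before the horizontal axis. -/
theorem stmt12 (f : ℝ → ℝ) (I : ℕ) (θ : ℕ → ℝ)
    (hH1 : H1 f I θ) (hH2 : H2 f I θ) (hH3 : H3 f I θ)
    (pu : ℝ) (hpu : pu ∈ StablePts I θ) (hpupos : 0 < pu) :
    ∃ C₁ : ℝ, ∀ c ≤ C₁, ∀ pl : ℝ, ∀ q : ℝ → ℝ,
      Traj f I θ c pu pl q → pl = 0 ∧ q 0 < 0 := by
  classical
  obtain ⟨hI, hθ0, hθ2I, hord, hfneg', hfposmid, hfneg1, hfnegmid⟩ := hH1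
  obtain ⟨i, hiI, hpui⟩ := hpu
  have hiltI : i < I := by
    rcases lt_or_eq_of_le hiI with h | rfl
    · exact h
    · rw [hθ2I] at hpui; linarith
  set a := θ (2 * i + 1) with ha
  have hapu : a < pu := by
    rw [hpui]; exact hord (2 * i) (2 * i + 1) (lt_add_one _) (by omega)
  have ha0 : 0 < a := by
    have h := hord (2 * i + 1) (2 * I) (by omega) le_rfl
    rw [hθ2I] at h; linarith
  have hfpos : ∀ u, a < u → u < pu → 0 < f u := fun u h1 h2 =>
    hfposmid i hiltI u h1 (by rwa [← hpui])
  have hnos : ∀ x ∈ Ioo a pu, x ∉ StablePts I θ := by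
    rintro x ⟨hx1, hx2⟩ ⟨j, hjI, rfl⟩
    rcases lt_trichotomy (2 * j) (2 * i) with h | h | h
    · have := hord (2 * j) (2 * i) h (by omega)
      rw [← hpui] at this; linarith
    · rw [hpui, show 2 * i = 2 * j from h.symm] at hx2; exact lt_irrefl _ hx2
    · have h2 : 2 * i + 1 < 2 * j := by omega
      have := hord (2 * i + 1) (2 * j) h2 (by omega)
      rw [← ha] at this; linarith
  obtain ⟨M, hM0, hMb⟩ := bdd_of_H2_H3 hH2 hH3 pu
  set a' := (a + pu) / 2 with ha'
  have haa' : a < a' := by rw [ha']; linarith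
  have ha'pu : a' < pu := by rw [ha']; linarith
  set δ := pu - a' with hδdef
  have hδ : 0 < δ := by rw [hδdef]; linarith
  set C₁ := -(1 + 2 * M * pu / δ ^ 2) with hC₁
  clear_value C₁ δ a' a
  have hC1neg : C₁ < 0 := by
    have : 0 ≤ 2 * M * pu / δ ^ 2 := by positivity
    rw [hC₁]; linarith
  refine ⟨C₁, fun c hc pl q hT => ?_⟩
  have hc0 : c < 0 := lt_of_le_of_lt hc hC1neg
  obtain ⟨⟨hpl0, hplpu⟩, hqc, hqpu, hqneg, hode, hposl, hzl⟩ := hT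
  have key : q pl ≠ 0 := by
    intro hqpl
    have hqint : IntervalIntegrable q volume pl pu :=
      (by rwa [uIcc_of_le hplpu.le] : ContinuousOn q (uIcc pl pu)).intervalIntegrable
    have hfint : IntervalIntegrable f volume pl pu :=
      f_intervalIntegrable hH2 hMb hpl0 hplpu.le
    have hint : IntervalIntegrable (fun p => -c * q p - f p) volume pl pu :=
      (hqint.const_mul (-c)).sub hfint
    have hFTC : ∫ p in pl..pu, (-c * q p - f p) = q pu ^ 2 / 2 - q pl ^ 2 / 2 := by
      have := MeasureTheory.integral_eq_of_hasDerivAt_off_countable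
        (f := fun p => q p ^ 2 / 2) (f' := fun p => -c * q p - f p)
        (a := pl) (b := pu) (s := StablePts I θ) (stablePts_countable I θ)
        ?_ ?_ hint
      · exact this
      · rw [uIcc_of_le hplpu.le]; exact (hqc.pow 2).div_const 2
      · rw [min_eq_left hplpu.le, max_eq_right hplpu.le]
        rintro x ⟨hx, hxs⟩
        have hq := hode x hx hxs
        have hqx : q x ≠ 0 := (hqneg x hx).ne
        have h1 : HasDerivAt (fun p => q p ^ 2 / 2)
            ((2 * q x ^ 1 * (-c - f x / q x)) / 2) x := (hq.pow 2).div_const 2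
        exact h1.congr_deriv (by field_simp)
    have hid : c * (∫ p in pl..pu, q p) + (∫ p in pl..pu, f p) = 0 := by
      rw [intervalIntegral.integral_sub (hqint.const_mul (-c)) hfint,
        intervalIntegral.integral_const_mul, hqpu, hqpl] at hFTC
      simp at hFTC
      linarith
    by_cases hcase : a' ≤ pl
    · have hposint : 0 < ∫ p in pl..pu, (c * q p + f p) := by
        refine intervalIntegral.intervalIntegral_pos_of_pos_on ((hqint.const_mul c).add hfint)
          (fun x hx => ?_) hplpu
        have hax : a < x := lt_of_lt_of_le haa' (hcase.trans hx.1.le)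
        exact add_pos (mul_pos_of_neg_of_neg hc0 (hqneg x hx)) (hfpos x hax hx.2)
      rw [intervalIntegral.integral_add (hqint.const_mul c) hfint,
        intervalIntegral.integral_const_mul] at hposint
      linarith
    · push_neg at hcase
      have hsub : Icc a' pu ⊆ Icc pl pu := Icc_subset_Icc hcase.le le_rfl
      have hderiv : ∀ x ∈ Ioo a' pu,
          HasDerivAt (fun p => q p + c * p) (-(f x / q x)) x := by
        intro x hx
        have hx' : x ∈ Ioo pl pu := ⟨hcase.trans hx.1, hx.2⟩
        have hxa : x ∈ Ioo a pu := ⟨haa'.trans hx.1, hx.2⟩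
        have hd := hode x hx' (hnos x hxa)
        have hcp : HasDerivAt (fun p : ℝ => c * p) c x := by
          simpa using (hasDerivAt_id x).const_mul c
        have := hd.add hcp
        exact this.congr_deriv (by ring)
      have hmono : MonotoneOn (fun p => q p + c * p) (Icc a' pu) := by
        apply monotoneOn_of_deriv_nonneg (convex_Icc _ _)
        · exact (hqc.mono hsub).add (continuous_const.mul continuous_id).continuousOn
        · intro x hx
          rw [interior_Icc] at hx
          exact (hderiv x hx).differentiableAt.differentiableWithinAt
        · intro x hx
          rw [interior_Icc] at hx
          rw [(hderiv x hx).deriv]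
          have hfq : f x / q x ≤ 0 := div_nonpos_of_nonneg_of_nonpos
            (hfpos x (haa'.trans hx.1) hx.2).le
            (hqneg x ⟨hcase.trans hx.1, hx.2⟩).le
          linarith
      have hqb : ∀ p ∈ Icc a' pu, q p ≤ c * (pu - p) := by
        intro p hp
        have := hmono hp (right_mem_Icc.mpr ha'pu.le) hp.2
        simp only [hqpu] at this
        nlinarith [this]
      have hqint1 : IntervalIntegrable q volume pl a' :=
        (by rw [uIcc_of_le hcase.le]
            exact hqc.mono (Icc_subset_Icc le_rfl ha'pu.le) :
          ContinuousOn q (uIcc pl a')).intervalIntegrable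
      have hqint2 : IntervalIntegrable q volume a' pu :=
        (by rw [uIcc_of_le ha'pu.le]
            exact hqc.mono hsub :
          ContinuousOn q (uIcc a' pu)).intervalIntegrable
      have hadd : (∫ p in pl..a', q p) + (∫ p in a'..pu, q p) = ∫ p in pl..pu, q p :=
        intervalIntegral.integral_add_adjacent_intervals hqint1 hqint2
      have h1 : (∫ p in pl..a', q p) ≤ 0 := by
        have hmon := intervalIntegral.integral_mono_on hcase.le hqint1
          (_root_.intervalIntegrable_const (c := (0:ℝ)))
          (fun x hx => ?_)
        · simpa using hmon
        · rcases eq_or_lt_of_le hx.1 with h | h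
          · rw [← h, hqpl]
          · exact (hqneg x ⟨h, lt_of_le_of_lt hx.2 ha'pu⟩).le
      have h2 : (∫ p in a'..pu, q p) ≤ ∫ p in a'..pu, c * (pu - p) :=
        intervalIntegral.integral_mono_on ha'pu.le hqint2
          ((continuous_const.mul (continuous_const.sub continuous_id)).intervalIntegrable _ _)
          hqb
      have h3 : (∫ p in a'..pu, c * (pu - p)) = c * δ ^ 2 / 2 := by
        rw [intervalIntegral.integral_const_mul,
          intervalIntegral.integral_sub (_root_.intervalIntegrable_const)
            intervalIntegral.intervalIntegrable_id,
          intervalIntegral.integral_const, integral_id]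
        simp only [smul_eq_mul, hδdef]
        ring
      have hQ : (∫ p in pl..pu, q p) ≤ c * δ ^ 2 / 2 := by
        rw [← hadd]; linarith
      have hF : -(M * pu) ≤ ∫ p in pl..pu, f p := by
        have hn := intervalIntegral.norm_integral_le_of_norm_le_const
          (C := M) (f := f) (a := pl) (b := pu) ?_
        · rw [Real.norm_eq_abs] at hn
          have h4 : |pu - pl| ≤ pu := by
            rw [abs_of_nonneg (by linarith)]; linarith
          have h5 := neg_abs_le (∫ p in pl..pu, f p)
          nlinarith
        · intro x hx
          rw [uIoc_of_le hplpu.le] at hx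
          rw [Real.norm_eq_abs]
          exact hMb x ⟨hpl0.trans hx.1.le, hx.2⟩
      have hcc : C₁ ^ 2 ≤ c ^ 2 := by
        have h := mul_self_le_mul_self (neg_nonneg.mpr hC1neg.le)
          (by linarith : -C₁ ≤ -c)
        calc C₁ ^ 2 = -C₁ * -C₁ := by ring
          _ ≤ -c * -c := h
          _ = c ^ 2 := by ring
      have h5 : c ^ 2 * δ ^ 2 / 2 ≤ c * ∫ p in pl..pu, q p := by
        have hm := mul_le_mul_of_nonpos_left hQ hc0.le
        calc c ^ 2 * δ ^ 2 / 2 = c * (c * δ ^ 2 / 2) := by ring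
          _ ≤ c * ∫ p in pl..pu, q p := hm
      have hB : M * pu < C₁ ^ 2 * δ ^ 2 / 2 := by
        have hδ2 : (0 : ℝ) < δ ^ 2 := by positivity
        have hBnn : (0:ℝ) ≤ 2 * M * pu / δ ^ 2 := by positivity
        have h6 : 2 * M * pu / δ ^ 2 * δ ^ 2 = 2 * M * pu :=
          div_mul_cancel₀ _ (ne_of_gt hδ2)
        have e : (-(1 + 2 * M * pu / δ ^ 2)) ^ 2 * δ ^ 2 / 2
            = δ ^ 2 / 2 + (2 * M * pu / δ ^ 2 * δ ^ 2)
              + (2 * M * pu / δ ^ 2 * δ ^ 2) * (2 * M * pu / δ ^ 2) / 2 := by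
          ring
        rw [h6] at e
        have hMpu : 0 ≤ M * pu := mul_nonneg hM0 hpupos.le
        have hMB : 0 ≤ 2 * M * pu * (2 * M * pu / δ ^ 2) :=
          mul_nonneg (by linarith) hBnn
        rw [hC₁, e]
        linarith
      have hcd : C₁ ^ 2 * δ ^ 2 ≤ c ^ 2 * δ ^ 2 :=
        mul_le_mul_of_nonneg_right hcc (by positivity)
      linarith
  have hpl : pl = 0 := by
    by_contra h
    exact key (hposl (lt_of_le_of_ne hpl0 (Ne.symm h)))
  refine ⟨hpl, ?_⟩
  rcases lt_or_eq_of_le (hzl hpl) with h | h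
  · exact h
  · exact absurd h (hpl ▸ key)
end
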